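/- arXiv:1303.2713 — 7 statements merged into one kernel-verified Lean document; each statement's English description precedes it below -/
import Mathlib

section
/- For every $\mu > -\pi^2$ there exists a unique positive solution $\phi_\mu \in H^3\cap H^1_0((0,1),\mathbb{R})$ of the boundary value problem $\phi'' + \phi^3 = \mu\phi$ on $(0,1)$ with $\phi(0)=\phi(1)=0$ (the focusing ground state). -/
/-!
Write a positive solution as `φ = a sin θ`. Conservation of the energy `φ'²/2 + φ⁴/4 - μφ²/2`
turns the equation into the first-order equation `θ' = g(θ)` with
`g(θ)² = (a²(1 + sin²θ) - 2μ)/2`, whose right-hand side is positive when `2μ < a²`; it is solved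
by inverting `θ ↦ ∫₀^θ 1/g`. The profile `a sin θ` is then a ground state exactly when the half
period `T(a) = ∫₀^π 1/g` equals `1`. `T` is continuous and strictly decreasing in `a`, is below
`1` for large `a` and above `1` for small admissible `a` (through a logarithmic divergence when
`μ > 0`, and through `T(a) ≥ π/√(a² - μ)` when `-π² < μ ≤ 0`), so `T(a) = 1` has exactly one
solution. Conversely a ground state has positive initial slope, so by uniqueness for the Cauchy
problem it coincides with the profile of the amplitude matching that slope, whose half period is
then `1`.
-/

open Set

/-- `φ` is a (classical, C³ up to the boundary, hence `H³ ∩ H¹₀`) positive solution of the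
focusing ground state problem `φ'' + φ³ = μ φ` on `(0,1)`, `φ(0)=φ(1)=0`. -/
def IsGroundState (μ : ℝ) (φ : ℝ → ℝ) : Prop :=
  ∃ φ' φ'' φ''' : ℝ → ℝ,
    (∀ x ∈ Set.Icc (0:ℝ) 1, HasDerivAt φ (φ' x) x ∧ HasDerivAt φ' (φ'' x) x ∧
      HasDerivAt φ'' (φ''' x) x) ∧
    ContinuousOn φ''' (Set.Icc 0 1) ∧
    φ 0 = 0 ∧ φ 1 = 0 ∧
    (∀ x ∈ Set.Ioo (0:ℝ) 1, 0 < φ x) ∧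
    (∀ x ∈ Set.Icc (0:ℝ) 1, φ'' x + φ x ^ 3 = μ * φ x)

open Filter Topology Real intervalIntegral

theorem secondOrder_ODE_solution_unique_of_mem_Icc_right {f : ℝ → ℝ} (hf : ContDiff ℝ 1 f)
    {a b : ℝ} {u u' v v' : ℝ → ℝ}
    (hu : ∀ t ∈ Icc a b, HasDerivAt u (u' t) t ∧ HasDerivAt u' (f (u t)) t)
    (hv : ∀ t ∈ Icc a b, HasDerivAt v (v' t) t ∧ HasDerivAt v' (f (v t)) t)
    (ha : u a = v a) (ha' : u' a = v' a) : EqOn u v (Icc a b) := by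
  set V : ℝ × ℝ → ℝ × ℝ := fun p => (p.2, f p.1)
  have hU : ∀ t ∈ Icc a b, HasDerivAt (fun t => (u t, u' t)) (V (u t, u' t)) t :=
    fun t ht => (hu t ht).1.prodMk (hu t ht).2
  have hW : ∀ t ∈ Icc a b, HasDerivAt (fun t => (v t, v' t)) (V (v t, v' t)) t :=
    fun t ht => (hv t ht).1.prodMk (hv t ht).2
  have hUc := HasDerivAt.continuousOn hU
  have hWc := HasDerivAt.continuousOn hW
  -- both trajectories stay in a compact set, on which `V` is Lipschitz
  set K := (fun t => (u t, u' t)) '' Icc a b ∪ (fun t => (v t, v' t)) '' Icc a b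
  have hK : IsCompact K :=
    (isCompact_Icc.image_of_continuousOn hUc).union (isCompact_Icc.image_of_continuousOn hWc)
  have hV : ContDiff ℝ 1 V := contDiff_snd.prodMk (hf.comp contDiff_fst)
  obtain ⟨L, hL⟩ := hV.locallyLipschitz.locallyLipschitzOn.exists_lipschitzOnWith_of_compact hK
  have hUW := ODE_solution_unique_of_mem_Icc_right (v := fun _ => V) (s := fun _ => K)
    (fun _ _ => hL) hUc (fun t ht => (hU t (Ico_subset_Icc_self ht)).hasDerivWithinAt)
    (fun t ht => Or.inl (mem_image_of_mem _ (Ico_subset_Icc_self ht))) hWc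
    (fun t ht => (hW t (Ico_subset_Icc_self ht)).hasDerivWithinAt)
    (fun t ht => Or.inr (mem_image_of_mem _ (Ico_subset_Icc_self ht))) (Prod.ext ha ha')
  exact fun t ht => congrArg Prod.fst (hUW ht)

theorem surjective_of_hasDerivAt_of_le {F F' : ℝ → ℝ} {c : ℝ} (hc : 0 < c)
    (hF : ∀ x, HasDerivAt F (F' x) x) (hF' : ∀ x, c ≤ F' x) : Function.Surjective F := by
  have hmono : Monotone fun x => F x - c * x := by
    have hG x : HasDerivAt (fun x => F x - c * x) (F' x - c * 1) x :=
      (hF x).sub ((hasDerivAt_id x).const_mul c)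
    refine monotone_of_deriv_nonneg (fun x => (hG x).differentiableAt) fun x => ?_
    rw [(hG x).deriv]
    linarith [hF' x]
  have hcont : Continuous F := continuous_iff_continuousAt.2 fun x => (hF x).continuousAt
  refine hcont.surjective ?_ ?_
  · refine tendsto_atTop_mono' _ ?_
      ((tendsto_id.const_mul_atTop hc).atTop_add (tendsto_const_nhds (x := F 0)))
    filter_upwards [eventually_ge_atTop 0] with x hx
    dsimp only [id]
    linarith [show F 0 - c * 0 ≤ F x - c * x from hmono hx]
  · refine tendsto_atBot_mono' _ ?_
      ((tendsto_id.const_mul_atBot hc).atBot_add (tendsto_const_nhds (x := F 0)))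
    filter_upwards [eventually_le_atBot 0] with x hx
    dsimp only [id]
    linarith [show F x - c * x ≤ F 0 - c * 0 from hmono hx]

theorem deriv_pos_of_secondOrder_ODE_of_pos {f : ℝ → ℝ} (hf : ContDiff ℝ 1 f) (hf0 : f 0 = 0)
    {a b : ℝ} (hab : a < b) {u u' : ℝ → ℝ}
    (hu : ∀ t ∈ Icc a b, HasDerivAt u (u' t) t ∧ HasDerivAt u' (f (u t)) t)
    (ha : u a = 0) (hpos : ∀ t ∈ Ioo a b, 0 < u t) : 0 < u' a := by
  have hnonneg : 0 ≤ u' a := by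
    refine ge_of_tendsto ((hasDerivWithinAt_iff_tendsto_slope' (s := Ioi a) (lt_irrefl a)).1
      (hu a (left_mem_Icc.2 hab.le)).1.hasDerivWithinAt) ?_
    filter_upwards [Ioo_mem_nhdsGT hab] with t ht
    rw [slope_def_field, ha, sub_zero]
    exact div_nonneg (hpos t ht).le (sub_nonneg.2 ht.1.le)
  refine hnonneg.lt_of_ne fun h0 => ?_
  have hzero : EqOn u 0 (Icc a b) := secondOrder_ODE_solution_unique_of_mem_Icc_right hf hu
    (v' := 0) (fun t _ => ⟨hasDerivAt_const t 0, by simp [hf0]⟩) ha h0.symm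
  have hmid : (a + b) / 2 ∈ Ioo a b := ⟨by linarith, by linarith⟩
  exact (hpos _ hmid).ne' (hzero (Ioo_subset_Icc_self hmid))

namespace FocusingGroundState

noncomputable def phaseSpeed (μ a θ : ℝ) : ℝ := √((a ^ 2 * (1 + sin θ ^ 2) - 2 * μ) / 2)

noncomputable def phaseTime (μ a θ : ℝ) : ℝ := ∫ u in 0..θ, (phaseSpeed μ a u)⁻¹

noncomputable def phase (μ a : ℝ) : ℝ → ℝ := Function.invFun (phaseTime μ a)

noncomputable def profile (μ a x : ℝ) : ℝ := a * sin (phase μ a x)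

noncomputable def profileDeriv (μ a x : ℝ) : ℝ :=
  a * cos (phase μ a x) * phaseSpeed μ a (phase μ a x)

noncomputable def halfPeriod (μ a : ℝ) : ℝ := phaseTime μ a π

variable {μ a : ℝ}

lemma phaseSpeed_radicand_pos (h : 2 * μ < a ^ 2) (θ : ℝ) :
    0 < (a ^ 2 * (1 + sin θ ^ 2) - 2 * μ) / 2 := by
  nlinarith [sq_nonneg (sin θ), sq_nonneg a]

lemma phaseSpeed_pos (h : 2 * μ < a ^ 2) (θ : ℝ) : 0 < phaseSpeed μ a θ :=
  sqrt_pos.2 (phaseSpeed_radicand_pos h θ)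

lemma phaseSpeed_sq (h : 2 * μ < a ^ 2) (θ : ℝ) :
    phaseSpeed μ a θ ^ 2 = (a ^ 2 * (1 + sin θ ^ 2) - 2 * μ) / 2 :=
  sq_sqrt (phaseSpeed_radicand_pos h θ).le

lemma phaseSpeed_le_sqrt (θ : ℝ) : phaseSpeed μ a θ ≤ √(a ^ 2 - μ) :=
  sqrt_le_sqrt (by nlinarith [sin_sq_le_one θ, sq_nonneg a])

lemma sqrt_le_phaseSpeed (θ : ℝ) : √((a ^ 2 - 2 * μ) / 2) ≤ phaseSpeed μ a θ :=
  sqrt_le_sqrt (by nlinarith [sq_nonneg (sin θ), sq_nonneg a])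

lemma continuous_phaseSpeed_uncurry : Continuous fun p : ℝ × ℝ => phaseSpeed μ p.1 p.2 := by
  unfold phaseSpeed; fun_prop

lemma continuous_phaseSpeed : Continuous (phaseSpeed μ a) :=
  continuous_phaseSpeed_uncurry.comp (Continuous.prodMk_right a)

lemma continuous_inv_phaseSpeed (h : 2 * μ < a ^ 2) : Continuous fun θ => (phaseSpeed μ a θ)⁻¹ :=
  continuous_phaseSpeed.inv₀ fun θ => (phaseSpeed_pos h θ).ne'

lemma hasDerivAt_phaseSpeed (h : 2 * μ < a ^ 2) (θ : ℝ) :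
    HasDerivAt (phaseSpeed μ a) (a ^ 2 * sin θ * cos θ / (2 * phaseSpeed μ a θ)) θ := by
  have hrad : HasDerivAt (fun θ => (a ^ 2 * (1 + sin θ ^ 2) - 2 * μ) / 2)
      (a ^ 2 * sin θ * cos θ) θ := by
    refine (((((hasDerivAt_sin θ).pow 2).const_add 1).const_mul (a ^ 2)).sub_const (2 * μ)
      |>.div_const 2).congr_deriv ?_
    ring
  exact hrad.sqrt (phaseSpeed_radicand_pos h θ).ne'

lemma hasDerivAt_phaseTime (h : 2 * μ < a ^ 2) (θ : ℝ) :
    HasDerivAt (phaseTime μ a) (phaseSpeed μ a θ)⁻¹ θ :=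
  integral_hasDerivAt_right ((continuous_inv_phaseSpeed h).intervalIntegrable _ _)
    (continuous_inv_phaseSpeed h).aestronglyMeasurable.stronglyMeasurableAtFilter
    (continuous_inv_phaseSpeed h).continuousAt

lemma strictMono_phaseTime (h : 2 * μ < a ^ 2) : StrictMono (phaseTime μ a) :=
  strictMono_of_hasDerivAt_pos (hasDerivAt_phaseTime h) fun θ => inv_pos.2 (phaseSpeed_pos h θ)

lemma surjective_phaseTime (h : 2 * μ < a ^ 2) : Function.Surjective (phaseTime μ a) :=
  surjective_of_hasDerivAt_of_le (inv_pos.2 (sqrt_pos.2 (by nlinarith [sq_nonneg a])))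
    (hasDerivAt_phaseTime h) fun θ => inv_anti₀ (phaseSpeed_pos h θ) (phaseSpeed_le_sqrt θ)

lemma phaseTime_phase (h : 2 * μ < a ^ 2) (x : ℝ) : phaseTime μ a (phase μ a x) = x :=
  Function.rightInverse_invFun (surjective_phaseTime h) x

lemma phase_phaseTime (h : 2 * μ < a ^ 2) (θ : ℝ) : phase μ a (phaseTime μ a θ) = θ :=
  Function.leftInverse_invFun (strictMono_phaseTime h).injective θ

lemma phaseTime_zero : phaseTime μ a 0 = 0 := integral_same

lemma phase_zero (h : 2 * μ < a ^ 2) : phase μ a 0 = 0 := by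
  simpa [phaseTime_zero] using phase_phaseTime h 0

lemma strictMono_phase (h : 2 * μ < a ^ 2) : StrictMono (phase μ a) := fun x y hxy =>
  (strictMono_phaseTime h).lt_iff_lt.1 (by rwa [phaseTime_phase h, phaseTime_phase h])

lemma continuous_phase (h : 2 * μ < a ^ 2) : Continuous (phase μ a) :=
  (strictMono_phase h).monotone.continuous_of_surjective fun θ => ⟨_, phase_phaseTime h θ⟩

lemma hasDerivAt_phase (h : 2 * μ < a ^ 2) (x : ℝ) :
    HasDerivAt (phase μ a) (phaseSpeed μ a (phase μ a x)) x := by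
  simpa using (hasDerivAt_phaseTime h (phase μ a x)).of_local_left_inverse
    (continuous_phase h).continuousAt (inv_pos.2 (phaseSpeed_pos h _)).ne'
    (Eventually.of_forall (phaseTime_phase h))

lemma hasDerivAt_profile (h : 2 * μ < a ^ 2) (x : ℝ) :
    HasDerivAt (profile μ a) (profileDeriv μ a x) x := by
  refine (((hasDerivAt_sin _).comp x (hasDerivAt_phase h x)).const_mul a).congr_deriv ?_
  simp only [profileDeriv]; ring

lemma hasDerivAt_profileDeriv (h : 2 * μ < a ^ 2) (x : ℝ) :
    HasDerivAt (profileDeriv μ a) (μ * profile μ a x - profile μ a x ^ 3) x := by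
  have hθ := hasDerivAt_phase h x
  refine ((((hasDerivAt_cos _).comp x hθ).const_mul a).mul
    ((hasDerivAt_phaseSpeed h _).comp x hθ)).congr_deriv ?_
  have hg := (phaseSpeed_pos h (phase μ a x)).ne'
  simp only [Function.comp_apply, profile]
  field_simp
  linear_combination (-(2 * a) * sin (phase μ a x)) * phaseSpeed_sq h (phase μ a x) +
    a ^ 3 * sin (phase μ a x) * sin_sq_add_cos_sq (phase μ a x)

lemma profile_zero (h : 2 * μ < a ^ 2) : profile μ a 0 = 0 := by
  simp [profile, phase_zero h]

lemma profileDeriv_zero (h : 2 * μ < a ^ 2) :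
    profileDeriv μ a 0 = a * √((a ^ 2 - 2 * μ) / 2) := by
  simp [profileDeriv, phase_zero h, phaseSpeed]

lemma phase_one (h : 2 * μ < a ^ 2) (hT : halfPeriod μ a = 1) : phase μ a 1 = π := by
  rw [← hT]; exact phase_phaseTime h π

lemma isGroundState_profile (h : 2 * μ < a ^ 2) (ha : 0 < a) (hT : halfPeriod μ a = 1) :
    IsGroundState μ (profile μ a) := by
  have hφ x := hasDerivAt_profile h x
  have hφ' x := hasDerivAt_profileDeriv h x
  have hφc : Continuous (profile μ a) := continuous_iff_continuousAt.2 fun x => (hφ x).continuousAt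
  have hφc' : Continuous (profileDeriv μ a) :=
    continuous_iff_continuousAt.2 fun x => (hφ' x).continuousAt
  refine ⟨profileDeriv μ a, fun x => μ * profile μ a x - profile μ a x ^ 3,
    fun x => μ * profileDeriv μ a x - 3 * profile μ a x ^ 2 * profileDeriv μ a x,
    fun x _ => ⟨hφ x, hφ' x, ?_⟩, by fun_prop, profile_zero h, ?_, fun x hx => ?_,
    fun x _ => by ring⟩
  · exact ((hφ x).const_mul μ).sub ((hφ x).pow 3) |>.congr_deriv (by ring)
  · simp [profile, phase_one h hT]
  · have hθ0 : 0 < phase μ a x := phase_zero h ▸ strictMono_phase h hx.1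
    have hθπ : phase μ a x < π := phase_one h hT ▸ strictMono_phase h hx.2
    exact mul_pos ha (sin_pos_of_pos_of_lt_pi hθ0 hθπ)

lemma halfPeriod_eq_one_of_profile (h : 2 * μ < a ^ 2) (ha : 0 < a) (h1 : profile μ a 1 = 0)
    (hpos : ∀ x ∈ Ioo (0 : ℝ) 1, 0 < profile μ a x) : halfPeriod μ a = 1 := by
  have hθ0 : 0 < phase μ a 1 := phase_zero h ▸ strictMono_phase h one_pos
  -- otherwise the profile would vanish at the interior point `halfPeriod μ a`
  have hθπ : phase μ a 1 ≤ π := by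
    by_contra! hlt
    have hT0 : 0 < halfPeriod μ a :=
      phaseTime_zero (μ := μ) (a := a) ▸ strictMono_phaseTime h pi_pos
    have hT1 : halfPeriod μ a < 1 := phaseTime_phase h 1 ▸ strictMono_phaseTime h hlt
    simpa [profile, halfPeriod, phase_phaseTime h] using hpos _ ⟨hT0, hT1⟩
  have hsin : sin (phase μ a 1) = 0 := by simpa [profile, ha.ne'] using h1
  have hθ : phase μ a 1 = π := hθπ.eq_or_lt.resolve_right fun hlt =>
    (sin_pos_of_pos_of_lt_pi hθ0 hlt).ne' hsin
  rw [halfPeriod, ← hθ, phaseTime_phase h]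

lemma continuousOn_halfPeriod : ContinuousOn (halfPeriod μ) {a | 2 * μ < a ^ 2} := by
  rw [continuousOn_iff_continuous_domRestrict]
  exact continuous_parametric_intervalIntegral_of_continuous'
    (f := fun (a : {a : ℝ // 2 * μ < a ^ 2}) θ => (phaseSpeed μ a θ)⁻¹)
    ((continuous_phaseSpeed_uncurry.comp (continuous_subtype_val.prodMap continuous_id)).inv₀
      fun p => (phaseSpeed_pos p.1.2 p.2).ne') 0 π

lemma strictAntiOn_halfPeriod : StrictAntiOn (halfPeriod μ) {a | 0 ≤ a ∧ 2 * μ < a ^ 2} := by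
  rintro a ⟨ha, h⟩ b ⟨-, h'⟩ hab
  have hlt θ : (phaseSpeed μ b θ)⁻¹ < (phaseSpeed μ a θ)⁻¹ := by
    refine inv_strictAnti₀ (phaseSpeed_pos h θ) (sqrt_lt_sqrt (phaseSpeed_radicand_pos h θ).le ?_)
    have : a ^ 2 < b ^ 2 := by nlinarith
    nlinarith [sq_nonneg (sin θ)]
  exact integral_lt_integral_of_continuousOn_of_le_of_exists_lt pi_pos
    (continuous_inv_phaseSpeed h').continuousOn (continuous_inv_phaseSpeed h).continuousOn
    (fun θ _ => (hlt θ).le) ⟨0, ⟨le_rfl, pi_pos.le⟩, hlt 0⟩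

lemma halfPeriod_le (h : 2 * μ < a ^ 2) : halfPeriod μ a ≤ π / √((a ^ 2 - 2 * μ) / 2) := by
  calc halfPeriod μ a ≤ ∫ _ in 0..π, (√((a ^ 2 - 2 * μ) / 2))⁻¹ :=
        integral_mono_on pi_pos.le ((continuous_inv_phaseSpeed h).intervalIntegrable _ _)
          intervalIntegrable_const fun θ _ =>
            inv_anti₀ (sqrt_pos.2 (by linarith)) (sqrt_le_phaseSpeed θ)
    _ = π / √((a ^ 2 - 2 * μ) / 2) := by
        simp only [integral_const, smul_eq_mul, sub_zero, div_eq_mul_inv]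

lemma pi_div_le_halfPeriod (h : 2 * μ < a ^ 2) : π / √(a ^ 2 - μ) ≤ halfPeriod μ a := by
  calc π / √(a ^ 2 - μ) = ∫ _ in 0..π, (√(a ^ 2 - μ))⁻¹ := by
        simp only [integral_const, smul_eq_mul, sub_zero, div_eq_mul_inv]
    _ ≤ halfPeriod μ a :=
        integral_mono_on pi_pos.le intervalIntegrable_const
          ((continuous_inv_phaseSpeed h).intervalIntegrable _ _) fun θ _ =>
            inv_anti₀ (phaseSpeed_pos h θ) (phaseSpeed_le_sqrt θ)

lemma log_le_halfPeriod {δ : ℝ} (hδ : 0 < δ) (ha : 0 < a) (had : a ^ 2 = 2 * μ + δ ^ 2) :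
    √2 / a * log (1 + a * π / δ) ≤ halfPeriod μ a := by
  have h : 2 * μ < a ^ 2 := by nlinarith
  have hden : ∀ θ ∈ Icc 0 π, 0 < a * θ + δ := fun θ hθ => by nlinarith [hθ.1]
  have hint : ∫ θ in 0..π, √2 * (a * θ + δ)⁻¹ = √2 / a * log (1 + a * π / δ) := by
    rw [integral_const_mul, integral_comp_mul_add (fun x => x⁻¹) ha.ne',
      integral_inv_of_pos (by simpa using hδ) (hden π ⟨pi_pos.le, le_rfl⟩),
      smul_eq_mul, mul_zero, zero_add, add_div' _ _ _ hδ.ne', one_mul, add_comm δ]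
    ring
  rw [← hint]
  refine integral_mono_on pi_pos.le ?_ ((continuous_inv_phaseSpeed h).intervalIntegrable _ _)
    fun θ hθ => ?_
  · refine (intervalIntegrable_inv (fun θ hθ => (hden θ ?_).ne') (by fun_prop)).const_mul _
    rwa [uIcc_of_le pi_pos.le] at hθ
  · have hsin : sin θ ^ 2 ≤ θ ^ 2 :=
      pow_le_pow_left₀ (sin_nonneg_of_nonneg_of_le_pi hθ.1 hθ.2) (sin_le hθ.1) 2
    have hle : phaseSpeed μ a θ ≤ (a * θ + δ) / √2 := by
      rw [phaseSpeed, sqrt_le_left (div_nonneg (hden θ hθ).le (sqrt_nonneg 2)), div_pow,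
        sq_sqrt zero_le_two, had]
      nlinarith [mul_nonneg ha.le hθ.1, hδ.le]
    calc √2 * (a * θ + δ)⁻¹ = ((a * θ + δ) / √2)⁻¹ := by rw [inv_div, div_eq_mul_inv]
      _ ≤ (phaseSpeed μ a θ)⁻¹ := inv_anti₀ (phaseSpeed_pos h θ) hle

lemma exists_one_lt_halfPeriod_of_pos (hμ : 0 < μ) :
    ∃ a, 0 < a ∧ 2 * μ < a ^ 2 ∧ 1 < halfPeriod μ a := by
  -- `δ` is small enough that `exp a ≤ a π / δ`, so the logarithmic bound exceeds `√2`
  set A := √(2 * μ + 1)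
  set δ := min 1 (√(2 * μ) * π / exp A)
  have hδ : 0 < δ := lt_min one_pos (by positivity)
  have had : √(2 * μ + δ ^ 2) ^ 2 = 2 * μ + δ ^ 2 := sq_sqrt (by positivity)
  set a := √(2 * μ + δ ^ 2)
  have ha : 0 < a := sqrt_pos.2 (by positivity)
  have haA : a ≤ A := sqrt_le_sqrt (by nlinarith [min_le_left 1 (√(2 * μ) * π / exp A)])
  have hμa : √(2 * μ) ≤ a := sqrt_le_sqrt (by nlinarith)
  have hlog : a ≤ log (1 + a * π / δ) := by
    rw [le_log_iff_exp_le (by positivity)]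
    calc exp a ≤ exp A := exp_le_exp.2 haA
      _ ≤ √(2 * μ) * π / δ := by
        rw [le_div_iff₀ hδ, mul_comm, ← le_div_iff₀ (exp_pos A)]
        exact min_le_right _ _
      _ ≤ 1 + a * π / δ := by
        have : √(2 * μ) * π / δ ≤ a * π / δ := by gcongr
        linarith
  refine ⟨a, ha, by nlinarith, ?_⟩
  calc 1 < √2 := by rw [lt_sqrt zero_le_one]; norm_num
    _ = √2 / a * a := by field_simp
    _ ≤ √2 / a * log (1 + a * π / δ) := by gcongr
    _ ≤ halfPeriod μ a := log_le_halfPeriod hδ ha had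

lemma exists_one_lt_halfPeriod (hμ : -π ^ 2 < μ) :
    ∃ a, 0 < a ∧ 2 * μ < a ^ 2 ∧ 1 < halfPeriod μ a := by
  rcases lt_or_ge 0 μ with hμ0 | hμ0
  · exact exists_one_lt_halfPeriod_of_pos hμ0
  -- for `μ ≤ 0` any `a` with `a ^ 2 - μ < π ^ 2` will do, and such `a` exist as `-π ^ 2 < μ`
  have ha2 : √((π ^ 2 + μ) / 2) ^ 2 = (π ^ 2 + μ) / 2 := sq_sqrt (by linarith)
  have h : 2 * μ < √((π ^ 2 + μ) / 2) ^ 2 := by rw [ha2]; linarith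
  refine ⟨_, sqrt_pos.2 (by linarith), h, ?_⟩
  calc 1 < π / √(√((π ^ 2 + μ) / 2) ^ 2 - μ) := by
        rw [one_lt_div (sqrt_pos.2 (by linarith)), sqrt_lt' pi_pos, ha2]
        linarith
    _ ≤ halfPeriod μ _ := pi_div_le_halfPeriod h

lemma exists_halfPeriod_eq_one (hμ : -π ^ 2 < μ) :
    ∃ a, 0 < a ∧ 2 * μ < a ^ 2 ∧ halfPeriod μ a = 1 := by
  obtain ⟨c, hc, hc2, hTc⟩ := exists_one_lt_halfPeriod hμ
  have hA2 : √(c ^ 2 + 4 * π ^ 2) ^ 2 = c ^ 2 + 4 * π ^ 2 := sq_sqrt (by positivity)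
  set A := √(c ^ 2 + 4 * π ^ 2)
  have hcA : c < A := (lt_sqrt hc.le).2 (by nlinarith [pi_pos])
  have hA : 2 * μ < A ^ 2 := by nlinarith [pi_pos]
  have hTA : halfPeriod μ A < 1 := by
    refine (halfPeriod_le hA).trans_lt ?_
    rw [div_lt_one (sqrt_pos.2 (by linarith)), lt_sqrt pi_pos.le, hA2]
    nlinarith
  have hsub : Icc c A ⊆ {a | 2 * μ < a ^ 2} := fun x hx => hc2.trans_le (by nlinarith [hx.1])
  obtain ⟨a, ha, hTa⟩ := intermediate_value_Icc' hcA.le (continuousOn_halfPeriod.mono hsub)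
    ⟨hTA.le, hTc.le⟩
  exact ⟨a, hc.trans_le ha.1, hsub ha, hTa⟩

lemma exists_amplitude_of_slope {σ : ℝ} (hσ : 0 < σ) :
    ∃ b, 0 < b ∧ 2 * μ < b ^ 2 ∧ b * √((b ^ 2 - 2 * μ) / 2) = σ := by
  -- `b ^ 2` is the positive root of `X (X - 2μ) = 2σ²`
  have hs2 : √(μ ^ 2 + 2 * σ ^ 2) ^ 2 = μ ^ 2 + 2 * σ ^ 2 := sq_sqrt (by positivity)
  set s := √(μ ^ 2 + 2 * σ ^ 2)
  have hμs : |μ| < s := abs_lt_of_sq_lt_sq (by nlinarith) (sqrt_nonneg _)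
  have hb2 : √(μ + s) ^ 2 = μ + s := sq_sqrt (by linarith [neg_abs_le μ])
  refine ⟨√(μ + s), sqrt_pos.2 (by linarith [neg_abs_le μ]), by linarith [le_abs_self μ], ?_⟩
  rw [hb2, ← sqrt_mul (by linarith [neg_abs_le μ]), sqrt_eq_iff_mul_self_eq_of_pos hσ]
  nlinarith

lemma exists_eqOn_profile_of_isGroundState {ψ : ℝ → ℝ} (hψ : IsGroundState μ ψ) :
    ∃ b, 0 < b ∧ 2 * μ < b ^ 2 ∧ halfPeriod μ b = 1 ∧ EqOn ψ (profile μ b) (Icc 0 1) := by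
  obtain ⟨ψ', ψ'', _, hder, -, h0, h1, hpos, heq⟩ := hψ
  have hf : ContDiff ℝ 1 fun y : ℝ => μ * y - y ^ 3 := by fun_prop
  have hψ : ∀ x ∈ Icc (0 : ℝ) 1, HasDerivAt ψ (ψ' x) x ∧ HasDerivAt ψ' (μ * ψ x - ψ x ^ 3) x :=
    fun x hx => ⟨(hder x hx).1, (hder x hx).2.1.congr_deriv (by linarith [heq x hx])⟩
  obtain ⟨b, hb, h, hslope⟩ :=
    exists_amplitude_of_slope (deriv_pos_of_secondOrder_ODE_of_pos hf (by ring) one_pos hψ h0 hpos)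
  have hψb : EqOn ψ (profile μ b) (Icc 0 1) :=
    secondOrder_ODE_solution_unique_of_mem_Icc_right hf hψ
      (fun x _ => ⟨hasDerivAt_profile h x, hasDerivAt_profileDeriv h x⟩)
      (by rw [h0, profile_zero h]) (by rw [profileDeriv_zero h, hslope])
  refine ⟨b, hb, h, halfPeriod_eq_one_of_profile h hb ?_ fun x hx => ?_, hψb⟩
  · rw [← hψb (right_mem_Icc.2 zero_le_one), h1]
  · rw [← hψb (Ioo_subset_Icc_self hx)]
    exact hpos x hx

end FocusingGroundState

open FocusingGroundState

/-- for every `μ > -π²` there is a unique positive solution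
`φ_μ ∈ H³ ∩ H¹₀((0,1),ℝ)` of `φ'' + φ³ = μ φ`, `φ(0)=φ(1)=0`. -/
theorem stmt_2 (μ : ℝ) (hμ : -Real.pi ^ 2 < μ) :
    ∃ φ : ℝ → ℝ, IsGroundState μ φ ∧
      ∀ ψ : ℝ → ℝ, IsGroundState μ ψ → Set.EqOn ψ φ (Set.Icc 0 1) := by
  obtain ⟨a, ha, h, hT⟩ := exists_halfPeriod_eq_one hμ
  refine ⟨profile μ a, isGroundState_profile h ha hT, fun ψ hψ => ?_⟩
  obtain ⟨b, hb, h', hTb, hψb⟩ := exists_eqOn_profile_of_isGroundState hψ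
  obtain rfl : b = a := strictAntiOn_halfPeriod.injOn ⟨hb.le, h'⟩ ⟨ha.le, h⟩ (hTb.trans hT.symm)
  exact hψb
end

section
/- The map $\mu\mapsto \phi_\mu$ from $(-\pi^2,\infty)$ to $L^2(0,1)$ satisfies the Vakhitov–Kolokolov condition $\langle \partial_\mu\phi_\mu,\phi_\mu\rangle > 0$ for every $\mu\in(-\pi^2,\infty)$, i.e. $\mu \mapsto \|\phi_\mu\|_{L^2}^2$ is strictly increasing. -/
/-!
Along a ground state, with `p = φ'`, the first integral `p² + φ⁴/2 - μφ² = p(0)²` factors as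
`p² = phaseQuartic A m φ = (A² - φ²)(φ² + A²(1 - m))/2` with `2μ = mA²`, `m < 1`. So `p` vanishes
only where `φ = A`, and there `p' = φ'' < 0`: `φ` rises to `A` once and falls back. Substituting
`u = φ(x)` on both halves, then `u = At`, gives `∫₀¹ φʲ = 2∫₀^A uʲ/√(phaseQuartic A m u) du
= 2Aʲ⁻¹Qⱼ(m)` with `Qⱼ(m) = ∫₀¹ tʲ/√(phaseQuartic 1 m t) dt`. For `j = 0` this says `A = 2Q₀(m)`,
so `μ = 2mQ₀(m)²` and `‖φ‖² = 4Q₀(m)Q₂(m)`. Both are strictly increasing in `m < 1` (for `m ≤ 0`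
because `√(-m) Q₀(m)` decreases), so `‖φ_μ‖²` increases with `μ`.
-/

open Set

open Filter Topology MeasureTheory

theorem HasDerivAt.eventually_nhdsGT_lt {f : ℝ → ℝ} {d z : ℝ} (hf : HasDerivAt f d z) (hd : d < 0) :
    ∀ᶠ x in 𝓝[>] z, f x < f z := by
  have hslope := hasDerivWithinAt_iff_tendsto_slope.1 (hf.hasDerivWithinAt (s := Ioi z))
  rw [sdiff_singleton_eq_self self_notMem_Ioi] at hslope
  filter_upwards [hslope.eventually_lt_const hd, self_mem_nhdsWithin] with x hx hzx
  rw [slope_def_field, div_lt_iff₀ (sub_pos.2 hzx), zero_mul] at hx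
  linarith

theorem HasDerivAt.eventually_nhdsLT_gt {f : ℝ → ℝ} {d z : ℝ} (hf : HasDerivAt f d z) (hd : d < 0) :
    ∀ᶠ x in 𝓝[<] z, f z < f x := by
  have hslope := hasDerivWithinAt_iff_tendsto_slope.1 (hf.hasDerivWithinAt (s := Iio z))
  rw [sdiff_singleton_eq_self self_notMem_Iio] at hslope
  filter_upwards [hslope.eventually_lt_const hd, self_mem_nhdsWithin] with x hx hxz
  rw [slope_def_field, div_lt_iff_of_neg (sub_neg.2 hxz), zero_mul] at hx
  linarith

/-- Continuous induction: `p ≤ 0` propagates to the right, also through zeros of `p`, where `p`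
decreases strictly. -/
theorem neg_on_Ioc_of_hasDerivAt_neg_at_zeros {p : ℝ → ℝ} {a b : ℝ}
    (hp : ContinuousOn p (Icc a b)) (ha : p a ≤ 0) (hb : p b < 0)
    (hzero : ∀ z ∈ Icc a b, p z = 0 → ∃ d < 0, HasDerivAt p d z) :
    ∀ x ∈ Ioc a b, p x < 0 := by
  have hnonpos : Icc a b ⊆ {x | p x ≤ 0} := by
    refine IsClosed.Icc_subset_of_forall_mem_nhdsWithin ?_ ha ?_
    · rw [inter_comm]
      exact hp.preimage_isClosed_of_isClosed isClosed_Icc isClosed_Iic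
    rintro x ⟨hx, hxI⟩
    rcases (show p x ≤ 0 from hx).lt_or_eq with hneg | hx0
    · have hIcc : Icc a b ∈ 𝓝[>] x :=
        mem_of_superset (Ioo_mem_nhdsGT hxI.2)
          (Ioo_subset_Icc_self.trans' (Ioo_subset_Ioo_left hxI.1))
      exact nhdsWithin_le_of_mem hIcc
        (((hp x (Ico_subset_Icc_self hxI)).eventually (gt_mem_nhds hneg)).mono fun y hy => hy.le)
    · obtain ⟨d, hd, hder⟩ := hzero x (Ico_subset_Icc_self hxI) hx0
      exact (hder.eventually_nhdsGT_lt hd).mono fun y hy => (hy.trans_eq hx0).le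
  intro x hx
  rcases hx.2.eq_or_lt with rfl | hxb
  · exact hb
  refine (hnonpos (Ioc_subset_Icc_self hx)).lt_of_ne fun hx0 => ?_
  obtain ⟨d, hd, hder⟩ := hzero x (Ioc_subset_Icc_self hx) hx0
  obtain ⟨y, hy, hyI⟩ := ((hder.eventually_nhdsLT_gt hd).and (Ioo_mem_nhdsLT hx.1)).exists
  exact (hnonpos (Ioo_subset_Icc_self.trans (Icc_subset_Icc_right hx.2) hyI)).not_gt (hx0 ▸ hy)

theorem pos_on_Ico_of_hasDerivAt_neg_at_zeros {p : ℝ → ℝ} {a b : ℝ}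
    (hp : ContinuousOn p (Icc a b)) (ha : 0 < p a) (hb : 0 ≤ p b)
    (hzero : ∀ z ∈ Icc a b, p z = 0 → ∃ d < 0, HasDerivAt p d z) :
    ∀ x ∈ Ico a b, 0 < p x := by
  have hmaps : MapsTo (fun x : ℝ => -x) (Icc (-b) (-a)) (Icc a b) := fun x hx =>
    ⟨le_neg_of_le_neg hx.2, neg_le.1 hx.1⟩
  have hmirror := neg_on_Ioc_of_hasDerivAt_neg_at_zeros (p := fun x => -p (-x))
    (hp.comp continuous_neg.continuousOn hmaps).neg (by simpa using hb) (by simpa using ha)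
    (fun z hz hz0 => by
      obtain ⟨d, hd, hder⟩ := hzero (-z) (hmaps hz) (neg_eq_zero.1 hz0)
      have hcomp : HasDerivAt (fun x => p (-x)) (d * -1) z := hder.comp z (hasDerivAt_neg z)
      exact ⟨d, hd, by simpa using hcomp.fun_neg⟩)
  intro x hx
  simpa using hmirror (-x) ⟨neg_lt_neg hx.2, neg_le_neg hx.1⟩

theorem exists_sign_change_of_hasDerivAt_neg_at_zeros {p : ℝ → ℝ} {a b : ℝ} (hab : a ≤ b)
    (hp : ContinuousOn p (Icc a b)) (ha : 0 < p a) (hb : p b < 0)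
    (hzero : ∀ z ∈ Icc a b, p z = 0 → ∃ d < 0, HasDerivAt p d z) :
    ∃ c ∈ Ioo a b, p c = 0 ∧ (∀ x ∈ Ico a c, 0 < p x) ∧ ∀ x ∈ Ioc c b, p x < 0 := by
  obtain ⟨c, hc, hc0⟩ := intermediate_value_Icc' hab hp ⟨hb.le, ha.le⟩
  refine ⟨c, ⟨hc.1.lt_of_ne ?_, hc.2.lt_of_ne ?_⟩, hc0, ?_, ?_⟩
  · rintro rfl; exact ha.ne' hc0
  · rintro rfl; exact hb.ne hc0
  · exact pos_on_Ico_of_hasDerivAt_neg_at_zeros (hp.mono (Icc_subset_Icc_right hc.2)) ha hc0.ge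
      fun z hz => hzero z ⟨hz.1, hz.2.trans hc.2⟩
  · exact neg_on_Ioc_of_hasDerivAt_neg_at_zeros (hp.mono (Icc_subset_Icc_left hc.1)) hc0.le hb
      fun z hz => hzero z ⟨hc.1.trans hz.1, hz.2⟩

theorem energy_eq_of_hasDerivAt {μ a b : ℝ} {φ p q : ℝ → ℝ}
    (hφ : ∀ x ∈ Icc a b, HasDerivAt φ (p x) x) (hp : ∀ x ∈ Icc a b, HasDerivAt p (q x) x)
    (heq : ∀ x ∈ Icc a b, q x + φ x ^ 3 = μ * φ x) :
    ∀ x ∈ Icc a b, p x ^ 2 + φ x ^ 4 / 2 - μ * φ x ^ 2 = p a ^ 2 + φ a ^ 4 / 2 - μ * φ a ^ 2 := by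
  have hE : ∀ x ∈ Icc a b, HasDerivAt (fun y => p y ^ 2 + φ y ^ 4 / 2 - μ * φ y ^ 2) 0 x := by
    intro x hx
    refine ((((hp x hx).pow 2).add (((hφ x hx).pow 4).div_const 2)).sub
      (((hφ x hx).pow 2).const_mul μ)).congr_deriv ?_
    push_cast
    linear_combination (2 * p x) * heq x hx
  exact constant_of_has_deriv_right_zero
    (fun x hx => (hE x hx).continuousAt.continuousWithinAt)
    (fun x hx => (hE x (Ico_subset_Icc_self hx)).hasDerivWithinAt)

theorem eq_zero_of_energy_eq_zero {μ a b : ℝ} {φ p : ℝ → ℝ}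
    (hφ : ∀ x ∈ Icc a b, HasDerivAt φ (p x) x) (ha : φ a = 0)
    (hE : ∀ x ∈ Icc a b, p x ^ 2 + φ x ^ 4 / 2 - μ * φ x ^ 2 = 0) :
    ∀ x ∈ Icc a b, φ x = 0 := by
  refine eq_zero_of_abs_deriv_le_mul_abs_self_of_eq_zero_right (K := √|μ|)
    (fun x hx => (hφ x hx).continuousAt.continuousWithinAt)
    (fun x hx => (hφ x (Ico_subset_Icc_self hx)).hasDerivWithinAt) ha fun x hx => ?_
  have hpx : p x ^ 2 ≤ |μ| * φ x ^ 2 := by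
    nlinarith [hE x (Ico_subset_Icc_self hx), le_abs_self μ, sq_nonneg (φ x),
      pow_nonneg (sq_nonneg (φ x)) 2]
  calc ‖p x‖ = |p x| := Real.norm_eq_abs _
    _ ≤ √(|μ| * φ x ^ 2) := Real.abs_le_sqrt hpx
    _ = √|μ| * ‖φ x‖ := by rw [Real.sqrt_mul (abs_nonneg μ), Real.sqrt_sq_eq_abs, Real.norm_eq_abs]

theorem integral_comp_eq_integral_div_sqrt_of_pos {φ p D G : ℝ → ℝ} {a b : ℝ} (hab : a ≤ b)
    (hφ : ContinuousOn φ (Icc a b)) (hφ' : ∀ x ∈ Ioo a b, HasDerivAt φ (p x) x)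
    (hp : ∀ x ∈ Ioo a b, 0 < p x) (hpD : ∀ x ∈ Ioo a b, p x ^ 2 = D (φ x)) :
    ∫ x in a..b, G (φ x) = ∫ u in φ a..φ b, G u / √(D u) := by
  rw [← intervalIntegral.integral_deriv_smul_comp_of_deriv_nonneg (uIcc_of_le hab ▸ hφ)
    (by simpa [hab] using hφ') (by simpa [hab] using fun x hx => (hp x hx).le)]
  refine intervalIntegral.integral_congr_Ioo_of_le hab fun x hx => ?_
  rw [Function.comp_apply, smul_eq_mul, ← hpD x hx, Real.sqrt_sq (hp x hx).le,
    mul_div_cancel₀ _ (hp x hx).ne']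

theorem integral_comp_eq_integral_div_sqrt_of_neg {φ p D G : ℝ → ℝ} {a b : ℝ} (hab : a ≤ b)
    (hφ : ContinuousOn φ (Icc a b)) (hφ' : ∀ x ∈ Ioo a b, HasDerivAt φ (p x) x)
    (hp : ∀ x ∈ Ioo a b, p x < 0) (hpD : ∀ x ∈ Ioo a b, p x ^ 2 = D (φ x)) :
    ∫ x in a..b, G (φ x) = ∫ u in φ b..φ a, G u / √(D u) := by
  rw [intervalIntegral.integral_symm (φ a) (φ b),
    ← intervalIntegral.integral_deriv_smul_comp_of_deriv_nonpos (uIcc_of_le hab ▸ hφ)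
      (by simpa [hab] using hφ') (by simpa [hab] using fun x hx => (hp x hx).le),
    ← intervalIntegral.integral_neg]
  refine intervalIntegral.integral_congr_Ioo_of_le hab fun x hx => ?_
  rw [Function.comp_apply, smul_eq_mul, ← hpD x hx, Real.sqrt_sq_eq_abs, abs_of_neg (hp x hx),
    div_neg, mul_neg, mul_div_cancel₀ _ (hp x hx).ne, neg_neg]

theorem integral_comp_eq_two_mul_integral_div_sqrt {φ p D G : ℝ → ℝ} {a b c A : ℝ}
    (hc : c ∈ Ioo a b) (hφ : ∀ x ∈ Icc a b, HasDerivAt φ (p x) x)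
    (hleft : ∀ x ∈ Ioo a c, 0 < p x) (hright : ∀ x ∈ Ioo c b, p x < 0)
    (hpD : ∀ x ∈ Icc a b, p x ^ 2 = D (φ x)) (ha : φ a = 0) (hb : φ b = 0) (hA : φ c = A)
    (hG : Continuous G) :
    ∫ x in a..b, G (φ x) = 2 * ∫ u in (0:ℝ)..A, G u / √(D u) := by
  have hac : Icc a c ⊆ Icc a b := Icc_subset_Icc_right hc.2.le
  have hcb : Icc c b ⊆ Icc a b := Icc_subset_Icc_left hc.1.le
  have hφc : ContinuousOn φ (Icc a b) := fun x hx => (hφ x hx).continuousAt.continuousWithinAt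
  have hGφ : ContinuousOn (fun x => G (φ x)) (Icc a b) := hG.comp_continuousOn hφc
  rw [← intervalIntegral.integral_add_adjacent_intervals (b := c)
      ((hGφ.mono hac).intervalIntegrable_of_Icc hc.1.le)
      ((hGφ.mono hcb).intervalIntegrable_of_Icc hc.2.le),
    integral_comp_eq_integral_div_sqrt_of_pos hc.1.le (hφc.mono hac)
      (fun x hx => hφ x (hac (Ioo_subset_Icc_self hx))) hleft
      (fun x hx => hpD x (hac (Ioo_subset_Icc_self hx))),
    integral_comp_eq_integral_div_sqrt_of_neg hc.2.le (hφc.mono hcb)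
      (fun x hx => hφ x (hcb (Ioo_subset_Icc_self hx))) hright
      (fun x hx => hpD x (hcb (Ioo_subset_Icc_self hx))), ha, hb, hA]
  ring

theorem intervalIntegrable_div_sqrt_of_le {f g : ℝ → ℝ} {a b c : ℝ} (hab : a ≤ b) (hc : 0 < c)
    (hf : Continuous f) (hg : Continuous g) (hle : ∀ t ∈ Ioo a b, c * (b - t) ≤ g t) :
    IntervalIntegrable (fun t => f t / √(g t)) volume a b := by
  obtain ⟨C, hC⟩ := (isCompact_Icc (a := a) (b := b)).exists_bound_of_continuousOn hf.continuousOn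
  have hdom : IntervalIntegrable (fun t => C / √c * (b - t) ^ (-(1 / 2) : ℝ)) volume a b := by
    have h := (intervalIntegral.intervalIntegrable_rpow' (a := 0) (b := b - a)
      (by norm_num : (-1 : ℝ) < -(1 / 2))).comp_sub_left b
    simpa using (h.symm.const_mul (C / √c))
  rw [intervalIntegrable_iff_integrableOn_Ioo_of_le hab] at hdom ⊢
  refine hdom.mono' (hf.measurable.div hg.measurable.sqrt).aestronglyMeasurable ?_
  filter_upwards [ae_restrict_mem measurableSet_Ioo] with t ht
  have hbt : 0 < b - t := sub_pos.2 ht.2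
  calc ‖f t / √(g t)‖ = |f t| / √(g t) := by
        rw [Real.norm_eq_abs, abs_div, abs_of_nonneg (Real.sqrt_nonneg _)]
    _ ≤ C / (√c * √(b - t)) := by
      rw [← Real.sqrt_mul hc.le]
      exact div_le_div₀ ((norm_nonneg _).trans (hC t (Ioo_subset_Icc_self ht)))
        (hC t (Ioo_subset_Icc_self ht)) (by positivity) (Real.sqrt_le_sqrt (hle t ht))
    _ = C / √c * (b - t) ^ (-(1 / 2) : ℝ) := by
      rw [Real.rpow_neg hbt.le, ← Real.sqrt_eq_rpow, div_mul_eq_div_div, div_eq_mul_inv (C / √c)]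

theorem intervalIntegral.integral_lt_integral_of_lt_on_Ioo {f g : ℝ → ℝ} {a b : ℝ} (hab : a < b)
    (hf : IntervalIntegrable f volume a b) (hg : IntervalIntegrable g volume a b)
    (hlt : ∀ x ∈ Ioo a b, f x < g x) : ∫ x in a..b, f x < ∫ x in a..b, g x := by
  rw [← sub_pos, ← intervalIntegral.integral_sub hg hf]
  exact intervalIntegral.intervalIntegral_pos_of_pos_on (hg.sub hf)
    (fun x hx => sub_pos.2 (hlt x hx)) hab

noncomputable def phaseQuartic (A m u : ℝ) : ℝ := (A ^ 2 - u ^ 2) * (u ^ 2 + A ^ 2 * (1 - m)) / 2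

theorem exists_phaseQuartic_eq (μ a : ℝ) (ha : a ≠ 0) :
    ∃ A m, 0 < A ∧ m < 1 ∧ 2 * μ = m * A ^ 2 ∧
      ∀ u, a ^ 2 + μ * u ^ 2 - u ^ 4 / 2 = phaseQuartic A m u := by
  -- `A²` is the positive root `μ + √(μ² + 2a²)` of `w² - 2μw - 2a²`.
  set S := √(μ ^ 2 + 2 * a ^ 2)
  have hS : S ^ 2 = μ ^ 2 + 2 * a ^ 2 := Real.sq_sqrt (by positivity)
  have hμS : |μ| < S :=
    abs_lt_of_sq_lt_sq (by nlinarith [sq_pos_of_ne_zero ha]) (Real.sqrt_nonneg _)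
  have hA : (√(μ + S)) ^ 2 = μ + S := Real.sq_sqrt (by linarith [neg_abs_le μ])
  have hA0 : 0 < √(μ + S) := Real.sqrt_pos.2 (by linarith [neg_abs_le μ])
  refine ⟨√(μ + S), 2 * μ / (μ + S), hA0, ?_, ?_, fun u => ?_⟩
  · rw [div_lt_one (by linarith [neg_abs_le μ])]
    linarith [le_abs_self μ]
  · rw [hA, div_mul_cancel₀ _ (by linarith [neg_abs_le μ])]
  · have hm : (μ + S) * (2 * μ / (μ + S)) = 2 * μ := mul_div_cancel₀ _ (by linarith [neg_abs_le μ])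
    unfold phaseQuartic
    rw [hA, mul_one_sub, hm]
    linear_combination (-1 / 2 : ℝ) * hS

theorem eq_of_phaseQuartic_eq_zero {A m u : ℝ} (hA : 0 < A) (hm : m < 1) (hu : 0 ≤ u)
    (h : phaseQuartic A m u = 0) : u = A := by
  have hpos : 0 < u ^ 2 + A ^ 2 * (1 - m) := by
    have := sub_pos.2 hm; positivity
  have hsq : A ^ 2 - u ^ 2 = 0 := by
    unfold phaseQuartic at h
    simpa [hpos.ne'] using h
  nlinarith

noncomputable def quarticIntegral (j : ℕ) (m : ℝ) : ℝ :=
  ∫ t in (0:ℝ)..1, t ^ j / √(phaseQuartic 1 m t)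

theorem integral_pow_div_sqrt_phaseQuartic (j : ℕ) {A : ℝ} (hA : 0 < A) (m : ℝ) :
    ∫ u in (0:ℝ)..A, u ^ j / √(phaseQuartic A m u) = A ^ j / A * quarticIntegral j m := by
  have hscale := intervalIntegral.smul_integral_comp_mul_left (a := 0) (b := 1)
    (fun u => u ^ j / √(phaseQuartic A m u)) A
  rw [mul_zero, mul_one] at hscale
  rw [← hscale, quarticIntegral, smul_eq_mul, ← intervalIntegral.integral_const_mul,
    ← intervalIntegral.integral_const_mul]
  congr 1
  ext t
  have hP : phaseQuartic A m (A * t) = (A ^ 2) ^ 2 * phaseQuartic 1 m t := by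
    unfold phaseQuartic; ring
  rw [hP, Real.sqrt_mul (by positivity : (0:ℝ) ≤ (A ^ 2) ^ 2), Real.sqrt_sq (by positivity)]
  field_simp
  ring

theorem phaseQuartic_one_pos {m t : ℝ} (hm : m < 1) (ht : t ∈ Ioo (0:ℝ) 1) :
    0 < phaseQuartic 1 m t := by
  unfold phaseQuartic
  have h₁ : 0 < 1 ^ 2 - t ^ 2 := by nlinarith [ht.1, ht.2]
  have h₂ : 0 < t ^ 2 + 1 ^ 2 * (1 - m) := by nlinarith [sq_nonneg t]
  positivity

theorem intervalIntegrable_pow_div_sqrt_phaseQuartic (j : ℕ) {m : ℝ} (hm : m < 1) :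
    IntervalIntegrable (fun t => t ^ j / √(phaseQuartic 1 m t)) volume 0 1 :=
  intervalIntegrable_div_sqrt_of_le zero_le_one (c := (1 - m) / 2) (by linarith) (continuous_pow j)
    (by unfold phaseQuartic; fun_prop) fun t ht => by
      unfold phaseQuartic; nlinarith [ht.1, ht.2, mul_pos ht.1 (sub_pos.2 ht.2), sq_nonneg t]

theorem quarticIntegral_pos (j : ℕ) {m : ℝ} (hm : m < 1) : 0 < quarticIntegral j m :=
  intervalIntegral.intervalIntegral_pos_of_pos_on
    (intervalIntegrable_pow_div_sqrt_phaseQuartic j hm)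
    (fun _ ht => div_pos (pow_pos ht.1 j) (Real.sqrt_pos.2 (phaseQuartic_one_pos hm ht)))
    zero_lt_one

theorem quarticIntegral_strictMonoOn (j : ℕ) : StrictMonoOn (quarticIntegral j) (Iio 1) := by
  intro m₁ hm₁ m₂ hm₂ hm
  refine intervalIntegral.integral_lt_integral_of_lt_on_Ioo zero_lt_one
    (intervalIntegrable_pow_div_sqrt_phaseQuartic j hm₁)
    (intervalIntegrable_pow_div_sqrt_phaseQuartic j hm₂) fun t ht => ?_
  have hlt : phaseQuartic 1 m₂ t < phaseQuartic 1 m₁ t := by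
    unfold phaseQuartic; nlinarith [ht.1, ht.2, mul_pos ht.1 (sub_pos.2 ht.2)]
  exact div_lt_div_of_pos_left (pow_pos ht.1 j) (Real.sqrt_pos.2 (phaseQuartic_one_pos hm₂ ht))
    (Real.sqrt_lt_sqrt (phaseQuartic_one_pos hm₂ ht).le hlt)

theorem sqrt_neg_mul_quarticIntegral_strictAntiOn :
    StrictAntiOn (fun m => √(-m) * quarticIntegral 0 m) (Iic 0) := by
  intro m₁ (hm₁ : m₁ ≤ 0) m₂ (hm₂ : m₂ ≤ 0) hm
  have hm₁' : m₁ < 1 := hm₁.trans_lt zero_lt_one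
  have hm₂' : m₂ < 1 := hm₂.trans_lt zero_lt_one
  simp only [quarticIntegral, ← intervalIntegral.integral_const_mul]
  refine intervalIntegral.integral_lt_integral_of_lt_on_Ioo zero_lt_one
    ((intervalIntegrable_pow_div_sqrt_phaseQuartic 0 hm₂').const_mul _)
    ((intervalIntegrable_pow_div_sqrt_phaseQuartic 0 hm₁').const_mul _) fun t ht => ?_
  have hP₁ := phaseQuartic_one_pos hm₁' ht
  have hP₂ := phaseQuartic_one_pos hm₂' ht
  have hcross : -m₂ * phaseQuartic 1 m₁ t < -m₁ * phaseQuartic 1 m₂ t := by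
    have hdiff : -m₁ * phaseQuartic 1 m₂ t - -m₂ * phaseQuartic 1 m₁ t =
        (1 - t ^ 2) * (t ^ 2 + 1) * (m₂ - m₁) / 2 := by
      unfold phaseQuartic; ring
    have : 0 < 1 - t ^ 2 := by nlinarith [ht.1, ht.2]
    have : 0 < (1 - t ^ 2) * (t ^ 2 + 1) * (m₂ - m₁) / 2 := by
      have := sub_pos.2 hm
      positivity
    linarith
  rw [pow_zero, mul_one_div, mul_one_div, div_lt_div_iff₀ (Real.sqrt_pos.2 hP₂)
    (Real.sqrt_pos.2 hP₁), ← Real.sqrt_mul (by linarith),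
    ← Real.sqrt_mul (by linarith)]
  exact Real.sqrt_lt_sqrt (mul_nonneg (by linarith) hP₁.le) hcross

theorem mul_quarticIntegral_sq_strictMonoOn :
    StrictMonoOn (fun m => m * quarticIntegral 0 m ^ 2) (Iio 1) := by
  intro m₁ hm₁ m₂ hm₂ hm
  have hQ₁ := quarticIntegral_pos 0 hm₁
  have hQ₂ := quarticIntegral_pos 0 hm₂
  rcases le_or_gt m₂ 0 with hm₂0 | hm₂0
  · have hR := sqrt_neg_mul_quarticIntegral_strictAntiOn (hm.le.trans hm₂0) hm₂0 hm
    have hsq := pow_lt_pow_left₀ hR (by positivity) two_ne_zero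
    simp only [mul_pow, Real.sq_sqrt (neg_nonneg.2 hm₂0),
      Real.sq_sqrt (neg_nonneg.2 (hm.le.trans hm₂0))] at hsq
    linarith
  · have hQ := quarticIntegral_strictMonoOn 0 hm₁ hm₂ hm
    dsimp only
    rcases le_or_gt m₁ 0 with hm₁0 | hm₁0
    · linarith [mul_nonpos_of_nonpos_of_nonneg hm₁0 (sq_nonneg (quarticIntegral 0 m₁)),
        mul_pos hm₂0 (pow_pos hQ₂ 2)]
    · nlinarith [pow_lt_pow_left₀ hQ hQ₁.le two_ne_zero]

theorem quarticIntegral_mul_strictMonoOn :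
    StrictMonoOn (fun m => quarticIntegral 0 m * quarticIntegral 2 m) (Iio 1) :=
  fun _ hm₁ _ hm₂ hm => mul_lt_mul'' (quarticIntegral_strictMonoOn 0 hm₁ hm₂ hm)
    (quarticIntegral_strictMonoOn 2 hm₁ hm₂ hm) (quarticIntegral_pos 0 hm₁).le
    (quarticIntegral_pos 2 hm₁).le

theorem boundary_slopes_of_energy {μ : ℝ} {φ p : ℝ → ℝ}
    (hφ : ∀ x ∈ Icc (0:ℝ) 1, HasDerivAt φ (p x) x) (h0 : φ 0 = 0) (h1 : φ 1 = 0)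
    (hpos : ∀ x ∈ Ioo (0:ℝ) 1, 0 < φ x)
    (hE : ∀ x ∈ Icc (0:ℝ) 1, p x ^ 2 + φ x ^ 4 / 2 - μ * φ x ^ 2 = p 0 ^ 2) :
    0 < p 0 ∧ p 1 = -p 0 := by
  have hhalf : (1 / 2 : ℝ) ∈ Ioo 0 1 := by norm_num
  have hne : p 0 ≠ 0 := fun hp0 => (hpos _ hhalf).ne'
    (eq_zero_of_energy_eq_zero hφ h0 (by simpa [hp0] using hE) _ (Ioo_subset_Icc_self hhalf))
  have hnonneg : 0 ≤ p 0 := by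
    by_contra! hneg
    obtain ⟨x, hx, hxI⟩ := (((hφ 0 (left_mem_Icc.2 zero_le_one)).eventually_nhdsGT_lt hneg).and
      (Ioo_mem_nhdsGT zero_lt_one)).exists
    exact (hpos x hxI).not_gt (h0 ▸ hx)
  have hnonpos : p 1 ≤ 0 := by
    by_contra! hp1
    obtain ⟨x, hx, hxI⟩ := (((hφ 1 (right_mem_Icc.2 zero_le_one)).neg.eventually_nhdsLT_gt
      (neg_lt_zero.2 hp1)).and (Ioo_mem_nhdsLT zero_lt_one)).exists
    exact (hpos x hxI).not_gt (by simpa [h1] using hx)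
  have hsq : p 1 ^ 2 = p 0 ^ 2 := by simpa [h1] using hE 1 (right_mem_Icc.2 zero_le_one)
  have hp0 : 0 < p 0 := hnonneg.lt_of_ne hne.symm
  refine ⟨hp0, ?_⟩
  rcases sq_eq_sq_iff_eq_or_eq_neg.1 hsq with h | h <;> linarith

theorem IsGroundState.exists_integral_comp_eq {μ : ℝ} {φ : ℝ → ℝ} (h : IsGroundState μ φ) :
    ∃ A m, 0 < A ∧ m < 1 ∧ 2 * μ = m * A ^ 2 ∧ ∀ G : ℝ → ℝ, Continuous G →
      ∫ x in (0:ℝ)..1, G (φ x) = 2 * ∫ u in (0:ℝ)..A, G u / √(phaseQuartic A m u) := by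
  obtain ⟨p, q, _, hder, -, h0, h1, hpos, heq⟩ := h
  have hφ : ∀ x ∈ Icc (0:ℝ) 1, HasDerivAt φ (p x) x := fun x hx => (hder x hx).1
  have hp : ∀ x ∈ Icc (0:ℝ) 1, HasDerivAt p (q x) x := fun x hx => (hder x hx).2.1
  have hφ0 : ∀ x ∈ Icc (0:ℝ) 1, 0 ≤ φ x := by
    rintro x ⟨hx0, hx1⟩
    rcases hx0.eq_or_lt with rfl | hx0
    · exact h0.ge
    rcases hx1.eq_or_lt with rfl | hx1
    · exact h1.ge
    exact (hpos x ⟨hx0, hx1⟩).le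
  have hE : ∀ x ∈ Icc (0:ℝ) 1, p x ^ 2 + φ x ^ 4 / 2 - μ * φ x ^ 2 = p 0 ^ 2 := by
    simpa [h0] using energy_eq_of_hasDerivAt hφ hp heq
  obtain ⟨hp0, hp1⟩ := boundary_slopes_of_energy hφ h0 h1 hpos hE
  obtain ⟨A, m, hA, hm, hμ, hQ⟩ := exists_phaseQuartic_eq μ (p 0) hp0.ne'
  have hpQ : ∀ x ∈ Icc (0:ℝ) 1, p x ^ 2 = phaseQuartic A m (φ x) := fun x hx => by
    rw [← hQ]; linarith [hE x hx]
  have hφA : ∀ z ∈ Icc (0:ℝ) 1, p z = 0 → φ z = A := fun z hz hz0 =>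
    eq_of_phaseQuartic_eq_zero hA hm (hφ0 z hz) (by rw [← hpQ z hz, hz0, sq, mul_zero])
  have hq : ∀ z ∈ Icc (0:ℝ) 1, p z = 0 → q z < 0 := fun z hz hz0 => by
    have hqz := heq z hz
    rw [hφA z hz hz0] at hqz
    have : 2 * q z = (m - 2) * A ^ 3 := by linear_combination 2 * hqz + A * hμ
    nlinarith [pow_pos hA 3]
  obtain ⟨c, hc, hc0, hleft, hright⟩ := exists_sign_change_of_hasDerivAt_neg_at_zeros zero_le_one
    (fun x hx => (hp x hx).continuousAt.continuousWithinAt) hp0 (by linarith)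
    fun z hz hz0 => ⟨q z, hq z hz hz0, hp z hz⟩
  exact ⟨A, m, hA, hm, hμ, fun G hG => integral_comp_eq_two_mul_integral_div_sqrt hc hφ
    (fun x hx => hleft x (Ioo_subset_Ico_self hx)) (fun x hx => hright x (Ioo_subset_Ioc_self hx))
    hpQ h0 h1 (hφA c (Ioo_subset_Icc_self hc) hc0) hG⟩

theorem IsGroundState.exists_quarticIntegral {μ : ℝ} {φ : ℝ → ℝ} (h : IsGroundState μ φ) :
    ∃ m < 1, μ = 2 * m * quarticIntegral 0 m ^ 2 ∧
      ∫ x in (0:ℝ)..1, φ x ^ 2 = 4 * quarticIntegral 0 m * quarticIntegral 2 m := by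
  obtain ⟨A, m, hA, hm, hμ, hG⟩ := h.exists_integral_comp_eq
  have hlength := hG (fun _ => 1) continuous_const
  have hmass := hG (fun u => u ^ 2) (continuous_pow 2)
  have h0 := integral_pow_div_sqrt_phaseQuartic 0 hA m
  rw [integral_pow_div_sqrt_phaseQuartic 2 hA m] at hmass
  simp only [pow_zero, intervalIntegral.integral_const, sub_zero, smul_eq_mul, mul_one]
    at hlength h0
  rw [h0] at hlength
  have hAQ : A = 2 * quarticIntegral 0 m := by
    field_simp at hlength; linarith
  refine ⟨m, hm, ?_, ?_⟩
  · rw [hAQ] at hμ; linarith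
  · rw [hmass, hAQ]; field_simp; ring

/-- Vakhitov–Kolokolov condition: the squared `L²` norm of the focusing
ground state, `μ ↦ ∫₀¹ φ_μ²`, is strictly increasing on `(-π², ∞)`. -/
theorem stmt_4 (φ : ℝ → ℝ → ℝ)
    (hφ : ∀ μ ∈ Set.Ioi (-Real.pi ^ 2), IsGroundState μ (φ μ)) :
    StrictMonoOn (fun μ => ∫ x in (0:ℝ)..1, φ μ x ^ 2)
      (Set.Ioi (-Real.pi ^ 2)) := by
  intro μ₁ h₁ μ₂ h₂ hμ
  obtain ⟨m₁, hm₁, hμ₁, hmass₁⟩ := (hφ μ₁ h₁).exists_quarticIntegral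
  obtain ⟨m₂, hm₂, hμ₂, hmass₂⟩ := (hφ μ₂ h₂).exists_quarticIntegral
  have hm : m₁ < m₂ := (mul_quarticIntegral_sq_strictMonoOn.lt_iff_lt hm₁ hm₂).1 (by linarith)
  have hQ := quarticIntegral_mul_strictMonoOn hm₁ hm₂ hm
  dsimp only at hQ ⊢
  linarith
end

section
/- For the focusing ground state, $\|\phi_\mu\|_{L^\infty(0,1)} \to 0$ as $\mu \to -\pi^2$. -/
/-!
For `μ ≤ 0` the equation makes `φ` concave, so `φ ≥ M / 3` on the middle third of `[0, 1]`,
where `M = max φ`. Testing the equation against `sin (π x)`, whose second derivative is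
`-π² sin (π x)`, gives `∫ sin (π x) φ³ = (μ + π²) ∫ sin (π x) φ`. The left side is at least
`M³ / 243` and the right side at most `(μ + π²) M`, hence `M² ≤ 243 (μ + π²)`.
-/

open Set Filter

open Real MeasureTheory intervalIntegral

namespace ConcaveOn

variable {s : Set ℝ} {f : ℝ → ℝ}

lemma mul_le_apply_of_nonneg (hf : ConcaveOn ℝ s f) {a b t : ℝ} (ha : a ∈ s) (hb : b ∈ s)
    (hfa : 0 ≤ f a) (ht : t ∈ Icc (0 : ℝ) 1) : t * f b ≤ f ((1 - t) * a + t * b) := by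
  have := hf.2 ha hb (sub_nonneg.2 ht.2) ht.1 (by ring)
  simp only [smul_eq_mul] at this
  nlinarith [mul_nonneg (sub_nonneg.2 ht.2) hfa]

lemma min_mul_le_apply (hf : ConcaveOn ℝ (Icc 0 1) f) (h0 : 0 ≤ f 0) (h1 : 0 ≤ f 1)
    {x y : ℝ} (hx : x ∈ Icc (0 : ℝ) 1) (hy : y ∈ Icc (0 : ℝ) 1) :
    min x (1 - x) * f y ≤ f x := by
  have hfy : 0 ≤ f y := le_trans (le_min h0 h1) <| hf.ge_on_segment
    (left_mem_Icc.2 zero_le_one) (right_mem_Icc.2 zero_le_one) (by simpa [segment_eq_Icc] using hy)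
  rcases lt_trichotomy x y with hxy | rfl | hyx
  · have hy0 : 0 < y := hx.1.trans_lt hxy
    have key := hf.mul_le_apply_of_nonneg (left_mem_Icc.2 zero_le_one) hy h0
      (t := x / y) ⟨div_nonneg hx.1 hy0.le, div_le_one_of_le₀ hxy.le hy0.le⟩
    rw [div_mul_cancel₀ x hy0.ne', mul_zero, zero_add] at key
    calc min x (1 - x) * f y ≤ x * f y := mul_le_mul_of_nonneg_right (min_le_left _ _) hfy
      _ ≤ x / y * f y := mul_le_mul_of_nonneg_right (le_div_self hx.1 hy0 hy.2) hfy
      _ ≤ f x := key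
  · exact mul_le_of_le_one_left hfy ((min_le_left _ _).trans hx.2)
  · have hy1 : 0 < 1 - y := sub_pos.2 (hyx.trans_le hx.2)
    have key := hf.mul_le_apply_of_nonneg (right_mem_Icc.2 zero_le_one) hy h1
      (t := (1 - x) / (1 - y)) ⟨div_nonneg (sub_nonneg.2 hx.2) hy1.le,
        div_le_one_of_le₀ (by linarith) hy1.le⟩
    rw [show (1 - (1 - x) / (1 - y)) * 1 + (1 - x) / (1 - y) * y = x by field_simp; ring] at key
    calc min x (1 - x) * f y ≤ (1 - x) * f y := mul_le_mul_of_nonneg_right (min_le_right _ _) hfy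
      _ ≤ (1 - x) / (1 - y) * f y :=
        mul_le_mul_of_nonneg_right (le_div_self (sub_nonneg.2 hx.2) hy1 (by linarith [hy.1])) hfy
      _ ≤ f x := key

end ConcaveOn

lemma concaveOn_sin_pi_mul : ConcaveOn ℝ (Icc 0 1) fun x => sin (π * x) := by
  have h := strictConcaveOn_sin_Icc.concaveOn.comp_linearMap (LinearMap.mulLeft ℝ π)
  have hpre : (LinearMap.mulLeft ℝ π) ⁻¹' Icc 0 π = Icc 0 1 := by
    ext x
    simp [mul_nonneg_iff_of_pos_left pi_pos, mul_le_iff_le_one_right pi_pos]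
  rw [hpre] at h
  exact h

lemma min_le_sin_pi_mul {x : ℝ} (hx : x ∈ Icc (0 : ℝ) 1) : min x (1 - x) ≤ sin (π * x) := by
  have h := concaveOn_sin_pi_mul.min_mul_le_apply (by simp) (by simp) hx
    (show (1 / 2 : ℝ) ∈ Icc 0 1 by norm_num)
  rwa [mul_one_div, sin_pi_div_two, mul_one] at h

lemma integral_mul_deriv_eq_neg_of_eq_zero {a b : ℝ} {u u' v v' : ℝ → ℝ}
    (hu : ∀ x ∈ uIcc a b, HasDerivAt u (u' x) x) (hv : ∀ x ∈ uIcc a b, HasDerivAt v (v' x) x)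
    (hu' : IntervalIntegrable u' volume a b) (hv' : IntervalIntegrable v' volume a b)
    (ha : u a = 0) (hb : u b = 0) :
    ∫ x in a..b, u x * v' x = -∫ x in a..b, u' x * v x := by
  simp [integral_mul_deriv_eq_deriv_mul hu hv hu' hv', ha, hb]

lemma integral_mul_deriv_deriv_symm {a b : ℝ} {u u' u'' v v' v'' : ℝ → ℝ}
    (hu : ∀ x ∈ uIcc a b, HasDerivAt u (u' x) x) (hu' : ∀ x ∈ uIcc a b, HasDerivAt u' (u'' x) x)
    (hv : ∀ x ∈ uIcc a b, HasDerivAt v (v' x) x) (hv' : ∀ x ∈ uIcc a b, HasDerivAt v' (v'' x) x)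
    (hu'' : IntervalIntegrable u'' volume a b) (hv'' : IntervalIntegrable v'' volume a b)
    (hua : u a = 0) (hub : u b = 0) (hva : v a = 0) (hvb : v b = 0) :
    ∫ x in a..b, u x * v'' x = ∫ x in a..b, u'' x * v x := by
  have hu'i : IntervalIntegrable u' volume a b :=
    ContinuousOn.intervalIntegrable fun x hx => (hu' x hx).continuousAt.continuousWithinAt
  have hv'i : IntervalIntegrable v' volume a b :=
    ContinuousOn.intervalIntegrable fun x hx => (hv' x hx).continuousAt.continuousWithinAt
  have huv := integral_mul_deriv_eq_neg_of_eq_zero hu hv' hu'i hv'' hua hub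
  have hvu := integral_mul_deriv_eq_neg_of_eq_zero hv hu' hv'i hu'' hva hvb
  simp only [mul_comm (v _), mul_comm (v' _)] at hvu
  rw [huv, hvu]

namespace IsGroundState

variable {μ : ℝ} {φ : ℝ → ℝ}

lemma nonneg (h : IsGroundState μ φ) {x : ℝ} (hx : x ∈ Icc (0 : ℝ) 1) : 0 ≤ φ x := by
  obtain ⟨-, -, -, -, -, h0, h1, hpos, -⟩ := h
  rcases hx.1.eq_or_lt with rfl | hx0
  · exact h0.ge
  rcases hx.2.eq_or_lt with rfl | hx1
  · exact h1.ge
  exact (hpos x ⟨hx0, hx1⟩).le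

lemma continuousOn (h : IsGroundState μ φ) : ContinuousOn φ (Icc 0 1) := by
  obtain ⟨_, _, _, hd, -⟩ := h
  exact fun x hx => (hd x hx).1.continuousAt.continuousWithinAt

/-- For `μ ≤ 0` the equation gives `φ'' = φ (μ - φ²) ≤ 0`. -/
lemma concaveOn (h : IsGroundState μ φ) (hμ : μ ≤ 0) : ConcaveOn ℝ (Icc 0 1) φ := by
  have hnn : ∀ x ∈ Icc (0 : ℝ) 1, 0 ≤ φ x := fun _ hx => h.nonneg hx
  have hc := h.continuousOn
  obtain ⟨φ', φ'', _, hd, -, -, -, -, heq⟩ := h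
  refine concaveOn_of_hasDerivWithinAt2_nonpos (convex_Icc 0 1) hc
    (f' := φ') (f'' := φ'') ?_ ?_ ?_ <;> rw [interior_Icc] <;> intro x hx
  · exact (hd x (Ioo_subset_Icc_self hx)).1.hasDerivWithinAt
  · exact (hd x (Ioo_subset_Icc_self hx)).2.1.hasDerivWithinAt
  · have hφ := hnn x (Ioo_subset_Icc_self hx)
    nlinarith [heq x (Ioo_subset_Icc_self hx), pow_nonneg hφ 3,
      mul_nonpos_of_nonpos_of_nonneg hμ hφ]

lemma intervalIntegrable_sin_pi_mul_mul_pow (h : IsGroundState μ φ) (n : ℕ) :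
    IntervalIntegrable (fun x => sin (π * x) * φ x ^ n) volume 0 1 := by
  refine ContinuousOn.intervalIntegrable ?_
  rw [uIcc_of_le zero_le_one]
  exact (by fun_prop : Continuous fun x => sin (π * x)).continuousOn.mul (h.continuousOn.pow n)

/-- Testing the equation against the first Dirichlet eigenfunction `sin (π x)`. -/
lemma integral_sin_pi_mul_mul_pow_three (h : IsGroundState μ φ) :
    ∫ x in (0 : ℝ)..1, sin (π * x) * φ x ^ 3 =
      (μ + π ^ 2) * ∫ x in (0 : ℝ)..1, sin (π * x) * φ x := by
  have hint : IntervalIntegrable (fun x => sin (π * x) * φ x) volume 0 1 := by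
    simpa using h.intervalIntegrable_sin_pi_mul_mul_pow 1
  obtain ⟨φ', φ'', _, hd, -, h0, h1, -, heq⟩ := h
  have hI : uIcc (0 : ℝ) 1 = Icc 0 1 := uIcc_of_le zero_le_one
  have hsin : ∀ x, HasDerivAt (fun x => sin (π * x)) (π * cos (π * x)) x := fun x => by
    simpa [mul_comm] using ((hasDerivAt_id x).const_mul π).sin
  have hcos : ∀ x, HasDerivAt (fun x => π * cos (π * x)) (-π ^ 2 * sin (π * x)) x := fun x =>
    ((((hasDerivAt_id x).const_mul π).cos).const_mul π).congr_deriv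
      (by simp only [id, mul_one]; ring)
  have hφ'' : ContinuousOn φ'' (uIcc 0 1) := fun x hx =>
    (hd x (hI ▸ hx)).2.2.continuousAt.continuousWithinAt
  have hgreen := integral_mul_deriv_deriv_symm (fun x _ => hsin x) (fun x _ => hcos x)
    (fun x hx => (hd x (hI ▸ hx)).1) (fun x hx => (hd x (hI ▸ hx)).2.1)
    ((by fun_prop : Continuous fun x => -π ^ 2 * sin (π * x)).intervalIntegrable _ _)
    hφ''.intervalIntegrable (by simp) (by simp) h0 h1
  have hpt : EqOn (fun x => sin (π * x) * φ x ^ 3)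
      (fun x => μ * (sin (π * x) * φ x) - sin (π * x) * φ'' x) (uIcc 0 1) := fun x hx => by
    linear_combination sin (π * x) * heq x (hI ▸ hx)
  have hint'' : IntervalIntegrable (fun x => sin (π * x) * φ'' x) volume 0 1 :=
    ((by fun_prop : Continuous fun x => sin (π * x)).continuousOn.mul hφ'').intervalIntegrable
  rw [integral_congr hpt, intervalIntegral.integral_sub (hint.const_mul μ) hint'',
    intervalIntegral.integral_const_mul, hgreen]
  simp_rw [mul_assoc]
  rw [intervalIntegral.integral_const_mul]
  ring

lemma integral_sin_pi_mul_mul_le (h : IsGroundState μ φ) {M : ℝ}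
    (hM : ∀ x ∈ Icc (0 : ℝ) 1, φ x ≤ M) : ∫ x in (0 : ℝ)..1, sin (π * x) * φ x ≤ M := by
  have hint := h.intervalIntegrable_sin_pi_mul_mul_pow 1
  simp only [pow_one] at hint
  simpa using intervalIntegral.integral_mono_on zero_le_one hint intervalIntegrable_const
    fun x hx => (mul_le_of_le_one_left (h.nonneg hx) (sin_le_one _)).trans (hM x hx)

/-- On the middle third `sin (π x) ≥ 1/3` and, by concavity, `φ x ≥ φ y / 3`. -/
lemma pow_three_div_le_integral_sin_pi_mul_mul_pow_three (h : IsGroundState μ φ) (hμ : μ ≤ 0)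
    {y : ℝ} (hy : y ∈ Icc (0 : ℝ) 1) :
    φ y ^ 3 / 243 ≤ ∫ x in (0 : ℝ)..1, sin (π * x) * φ x ^ 3 := by
  have hint := h.intervalIntegrable_sin_pi_mul_mul_pow 3
  have hy0 := h.nonneg hy
  have hmid : ∀ x ∈ Icc (1 / 3 : ℝ) (2 / 3), φ y ^ 3 / 81 ≤ sin (π * x) * φ x ^ 3 := by
    intro x hx
    have hx01 : x ∈ Icc (0 : ℝ) 1 := ⟨by linarith [hx.1], by linarith [hx.2]⟩
    have hmin : 1 / 3 ≤ min x (1 - x) := le_min hx.1 (by linarith [hx.2])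
    have hsin : 1 / 3 ≤ sin (π * x) := hmin.trans (min_le_sin_pi_mul hx01)
    have hφ : φ y / 3 ≤ φ x := by
      nlinarith [(h.concaveOn hμ).min_mul_le_apply (h.nonneg (left_mem_Icc.2 zero_le_one))
        (h.nonneg (right_mem_Icc.2 zero_le_one)) hx01 hy]
    calc φ y ^ 3 / 81 = 1 / 3 * (φ y / 3) ^ 3 := by ring
      _ ≤ sin (π * x) * φ x ^ 3 :=
        mul_le_mul hsin (pow_le_pow_left₀ (by linarith) hφ 3) (by positivity) (by linarith)
  have hnonneg : ∀ x ∈ Ioc (0 : ℝ) 1, 0 ≤ sin (π * x) * φ x ^ 3 := fun x hx =>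
    mul_nonneg
      ((le_min hx.1.le (sub_nonneg.2 hx.2)).trans (min_le_sin_pi_mul (Ioc_subset_Icc_self hx)))
      (pow_nonneg (h.nonneg (Ioc_subset_Icc_self hx)) 3)
  calc φ y ^ 3 / 243 = ∫ _ in (1 / 3 : ℝ)..(2 / 3), φ y ^ 3 / 81 := by
        rw [intervalIntegral.integral_const, smul_eq_mul]; ring
    _ ≤ ∫ x in (1 / 3 : ℝ)..(2 / 3), sin (π * x) * φ x ^ 3 :=
        intervalIntegral.integral_mono_on (by norm_num) intervalIntegrable_const
          (hint.mono_set (by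
            rw [uIcc_of_le (by norm_num), uIcc_of_le zero_le_one]
            exact Icc_subset_Icc (by norm_num) (by norm_num))) hmid
    _ ≤ ∫ x in (0 : ℝ)..1, sin (π * x) * φ x ^ 3 :=
        intervalIntegral.integral_mono_interval (by norm_num) (by norm_num) (by norm_num)
          (ae_restrict_of_forall_mem measurableSet_Ioc hnonneg) hint

lemma le_sqrt (h : IsGroundState μ φ) (hμ₁ : -π ^ 2 ≤ μ) (hμ₀ : μ ≤ 0) {x : ℝ}
    (hx : x ∈ Icc (0 : ℝ) 1) : φ x ≤ √(243 * (μ + π ^ 2)) := by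
  obtain ⟨x₀, hx₀, hmax⟩ :=
    isCompact_Icc.exists_isMaxOn (nonempty_Icc.2 zero_le_one) h.continuousOn
  have hM := h.nonneg hx₀
  have key : φ x₀ ^ 3 / 243 ≤ (μ + π ^ 2) * φ x₀ :=
    calc φ x₀ ^ 3 / 243 ≤ ∫ x in (0 : ℝ)..1, sin (π * x) * φ x ^ 3 :=
          h.pow_three_div_le_integral_sin_pi_mul_mul_pow_three hμ₀ hx₀
      _ = (μ + π ^ 2) * ∫ x in (0 : ℝ)..1, sin (π * x) * φ x :=
          h.integral_sin_pi_mul_mul_pow_three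
      _ ≤ (μ + π ^ 2) * φ x₀ :=
          mul_le_mul_of_nonneg_left (h.integral_sin_pi_mul_mul_le hmax) (by linarith)
  have hsq : φ x₀ ^ 2 ≤ 243 * (μ + π ^ 2) := by
    rcases hM.eq_or_lt with hM0 | hM0
    · rw [← hM0]; linarith
    · nlinarith
  exact (hmax hx).trans (le_sqrt_of_sq_le hsq)

end IsGroundState

/-- `‖φ_μ‖_{L^∞(0,1)} → 0` as `μ → -π²` (from the right). -/
theorem stmt_5 (φ : ℝ → ℝ → ℝ)
    (hφ : ∀ μ ∈ Set.Ioi (-Real.pi ^ 2), IsGroundState μ (φ μ)) :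
    Filter.Tendsto (fun μ => sSup ((fun x => |φ μ x|) '' Set.Icc (0:ℝ) 1))
      (nhdsWithin (-Real.pi ^ 2) (Set.Ioi (-Real.pi ^ 2))) (nhds 0) := by
  have hsqrt : Tendsto (fun μ => √(243 * (μ + π ^ 2)))
      (nhdsWithin (-π ^ 2) (Ioi (-π ^ 2))) (nhds 0) := by
    have := ((continuous_const.mul (continuous_id.add continuous_const)).sqrt.tendsto
      (-π ^ 2) : Tendsto (fun μ : ℝ => √(243 * (μ + π ^ 2))) _ _)
    simpa using this.mono_left nhdsWithin_le_nhds
  refine tendsto_of_tendsto_of_tendsto_of_le_of_le' tendsto_const_nhds hsqrt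
    (Eventually.of_forall fun μ => Real.sSup_nonneg ?_) ?_
  · rintro _ ⟨x, -, rfl⟩
    exact abs_nonneg _
  filter_upwards [self_mem_nhdsWithin, eventually_nhdsWithin_of_eventually_nhds
    (gt_mem_nhds (neg_lt_zero.2 (pow_pos pi_pos 2)))] with μ hμ hμ₀
  refine Real.sSup_le ?_ (sqrt_nonneg _)
  rintro _ ⟨x, hx, rfl⟩
  exact (abs_of_nonneg ((hφ μ hμ).nonneg hx)).trans_le
    ((hφ μ hμ).le_sqrt (le_of_lt hμ) hμ₀.le hx)
end

section
/- The kernel of the operator $L_\mu^- = -\frac{d^2}{dx^2} + \mu - \phi_\mu^2$ with domain $H^2\cap H^1_0(0,1)$ is exactly $\mathbb{C}\,\phi_\mu$: it is one-dimensional, spanned by the ground state. -/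
open Set

/-!
Since `φ'' = (μ - φ²) φ`, the ground state lies in the kernel of `L_μ⁻`. Conversely, every
element `w` of the kernel solves the same linear second-order equation `w'' = (μ - φ²) w`
as `φ` with `w(0) = φ(0) = 0`. By uniqueness for this linear ODE, a solution vanishing to first
order at `0` vanishes identically; as `φ > 0` inside, this forces `φ'(0) ≠ 0`, and then
`w - (w'(0) / φ'(0)) φ`, which vanishes to first order at `0`, is identically zero.
-/

section SecondOrderLinear

variable {E : Type*} [NormedAddCommGroup E] [NormedSpace ℝ E] {q : ℝ → ℝ} {a b : ℝ}

/-- The first-order system `(u, u')' = (u', c • u)` equivalent to `u'' = c • u`. -/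
lemma lipschitzWith_secondOrderLinear {K : NNReal} {c : ℝ} (hc : ‖c‖₊ ≤ K) :
    LipschitzWith (max 1 K) (fun p : E × E => (p.2, c • p.1)) :=
  LipschitzWith.prod_snd.prodMk
    (((lipschitzWith_smul c).comp LipschitzWith.prod_fst).weaken (by simpa using hc))

theorem eqOn_zero_of_secondOrderLinear (hq : ContinuousOn q (Icc a b)) {u u' : ℝ → E}
    (hu : ∀ x ∈ Icc a b, HasDerivAt u (u' x) x)
    (hu' : ∀ x ∈ Icc a b, HasDerivAt u' (q x • u x) x) (ha : u a = 0) (ha' : u' a = 0) :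
    EqOn u 0 (Icc a b) := by
  obtain ⟨C, hC⟩ := isCompact_Icc.exists_bound_of_continuousOn hq
  have hlip : ∀ t ∈ Ico a b, LipschitzOnWith (max 1 C.toNNReal)
      (fun p : E × E => (p.2, q t • p.1)) univ := fun t ht =>
    (lipschitzWith_secondOrderLinear <| by
      rw [← NNReal.coe_le_coe, coe_nnnorm]
      exact (hC t (Ico_subset_Icc_self ht)).trans (Real.le_coe_toNNReal C)).lipschitzOnWith
  have hpair : EqOn (fun t => (u t, u' t)) (fun _ => 0) (Icc a b) := by
    refine ODE_solution_unique_of_mem_Icc_right hlip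
      (fun t ht => ((hu t ht).continuousAt.prodMk (hu' t ht).continuousAt).continuousWithinAt)
      (fun t ht => ((hu t (Ico_subset_Icc_self ht)).prodMk
        (hu' t (Ico_subset_Icc_self ht))).hasDerivWithinAt)
      (fun _ _ => mem_univ _) continuousOn_const
      (fun t _ => by convert (hasDerivAt_const t (0 : E × E)).hasDerivWithinAt using 1; simp)
      (fun _ _ => mem_univ _) (by simp [ha, ha'])
  exact fun x hx => congrArg Prod.fst (hpair hx)

theorem eqOn_smul_of_secondOrderLinear (hq : ContinuousOn q (Icc a b)) {φ φ' : ℝ → ℝ}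
    (hφ : ∀ x ∈ Icc a b, HasDerivAt φ (φ' x) x)
    (hφ' : ∀ x ∈ Icc a b, HasDerivAt φ' (q x * φ x) x) (hφa : φ a = 0) (hφ'a : φ' a ≠ 0)
    {w w' : ℝ → E} (hw : ∀ x ∈ Icc a b, HasDerivAt w (w' x) x)
    (hw' : ∀ x ∈ Icc a b, HasDerivAt w' (q x • w x) x) (hwa : w a = 0) :
    EqOn w (fun x => φ x • (φ' a)⁻¹ • w' a) (Icc a b) := by
  set c := (φ' a)⁻¹ • w' a
  have hdiff : EqOn (fun x => w x - φ x • c) 0 (Icc a b) := by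
    refine eqOn_zero_of_secondOrderLinear hq (u' := fun x => w' x - φ' x • c)
      (fun x hx => (hw x hx).sub ((hφ x hx).smul_const c))
      (fun x hx => ?_) (by simp [hwa, hφa]) (by simp [c, smul_smul, hφ'a])
    exact ((hw' x hx).sub ((hφ' x hx).smul_const c)).congr_deriv (by rw [smul_sub, mul_smul])
  exact fun x hx => sub_eq_zero.mp (hdiff hx)

end SecondOrderLinear

namespace IsGroundState

variable {μ : ℝ} {φ : ℝ → ℝ}

lemma map_zero (hφ : IsGroundState μ φ) : φ 0 = 0 := by
  obtain ⟨_, _, _, -, -, h0, -⟩ := hφ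
  exact h0

lemma continuousOn_potential (hφ : IsGroundState μ φ) :
    ContinuousOn (fun x => μ - φ x ^ 2) (Icc 0 1) := by
  obtain ⟨_, _, _, hdd, -⟩ := hφ
  have hφc : ContinuousOn φ (Icc 0 1) := fun x hx =>
    (hdd x hx).1.continuousAt.continuousWithinAt
  exact continuousOn_const.sub (hφc.pow 2)

lemma exists_hasDerivAt_deriv_ne_zero (hφ : IsGroundState μ φ) :
    ∃ φ' : ℝ → ℝ, (∀ x ∈ Icc (0:ℝ) 1,
      HasDerivAt φ (φ' x) x ∧ HasDerivAt φ' ((μ - φ x ^ 2) * φ x) x) ∧ φ' 0 ≠ 0 := by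
  have hq := hφ.continuousOn_potential
  obtain ⟨φ', φ'', _, hdd, -, h0, -, hpos, hODE⟩ := hφ
  have hφ' : ∀ x ∈ Icc (0:ℝ) 1, HasDerivAt φ' ((μ - φ x ^ 2) * φ x) x := fun x hx =>
    (hdd x hx).2.1.congr_deriv (by linear_combination hODE x hx)
  refine ⟨φ', fun x hx => ⟨(hdd x hx).1, hφ' x hx⟩, fun hslope => ?_⟩
  have hvanish := eqOn_zero_of_secondOrderLinear hq (fun x hx => (hdd x hx).1)
    (fun x hx => by simpa only [smul_eq_mul] using hφ' x hx) h0 hslope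
  exact (hpos (1 / 2) (by norm_num)).ne' (hvanish (by norm_num))

end IsGroundState

theorem stmt_7_general (μ : ℝ) (φ : ℝ → ℝ)
    (hφ : IsGroundState μ φ) :
    (∀ w w' w'' : ℝ → ℂ,
      (∀ x ∈ Set.Icc (0:ℝ) 1, HasDerivAt w (w' x) x ∧ HasDerivAt w' (w'' x) x) →
      w 0 = 0 → w 1 = 0 →
      (∀ x ∈ Set.Icc (0:ℝ) 1, -w'' x + ((μ : ℂ) - (φ x : ℂ) ^ 2) * w x = 0) →
      ∃ c : ℂ, ∀ x ∈ Set.Icc (0:ℝ) 1, w x = c * (φ x : ℂ)) ∧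
    (∀ c : ℂ, ∃ w' w'' : ℝ → ℂ,
      (∀ x ∈ Set.Icc (0:ℝ) 1,
        HasDerivAt (fun y : ℝ => c * (φ y : ℂ)) (w' x) x ∧ HasDerivAt w' (w'' x) x) ∧
      (∀ x ∈ Set.Icc (0:ℝ) 1,
        -w'' x + ((μ : ℂ) - (φ x : ℂ) ^ 2) * (c * (φ x : ℂ)) = 0)) := by
  obtain ⟨φ', hφ', hslope⟩ := hφ.exists_hasDerivAt_deriv_ne_zero
  have hq := hφ.continuousOn_potential
  refine ⟨fun w w' w'' hw hw0 _ hker => ?_, fun c => ?_⟩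
  · have hw' : ∀ x ∈ Icc (0:ℝ) 1, HasDerivAt w' ((μ - φ x ^ 2) • w x) x := fun x hx =>
      (hw x hx).2.congr_deriv (by rw [Complex.real_smul]; push_cast; linear_combination -hker x hx)
    refine ⟨(φ' 0)⁻¹ • w' 0, fun x hx => ?_⟩
    rw [eqOn_smul_of_secondOrderLinear hq (fun x hx => (hφ' x hx).1) (fun x hx => (hφ' x hx).2)
      hφ.map_zero hslope (fun x hx => (hw x hx).1) hw' hw0 hx]
    simp only [Complex.real_smul, mul_comm]
  · refine ⟨fun x => c * (φ' x : ℂ), fun x => c * ((μ - φ x ^ 2) * φ x : ℝ),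
      fun x hx => ⟨(hφ' x hx).1.ofReal_comp.const_mul c, (hφ' x hx).2.ofReal_comp.const_mul c⟩,
      fun x _ => by push_cast; ring⟩

/-- the kernel of `L_μ⁻ = -d²/dx² + μ - φ_μ²` with Dirichlet conditions on
`(0,1)` is exactly `ℂ φ_μ`. -/
theorem stmt_7 (μ : ℝ) (hμ : -Real.pi ^ 2 < μ) (φ : ℝ → ℝ)
    (hφ : IsGroundState μ φ) :
    (∀ w w' w'' : ℝ → ℂ,
      (∀ x ∈ Set.Icc (0:ℝ) 1, HasDerivAt w (w' x) x ∧ HasDerivAt w' (w'' x) x) →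
      w 0 = 0 → w 1 = 0 →
      (∀ x ∈ Set.Icc (0:ℝ) 1, -w'' x + ((μ : ℂ) - (φ x : ℂ) ^ 2) * w x = 0) →
      ∃ c : ℂ, ∀ x ∈ Set.Icc (0:ℝ) 1, w x = c * (φ x : ℂ)) ∧
    (∀ c : ℂ, ∃ w' w'' : ℝ → ℂ,
      (∀ x ∈ Set.Icc (0:ℝ) 1,
        HasDerivAt (fun y : ℝ => c * (φ y : ℂ)) (w' x) x ∧ HasDerivAt w' (w'' x) x) ∧
      (∀ x ∈ Set.Icc (0:ℝ) 1,
        -w'' x + ((μ : ℂ) - (φ x : ℂ) ^ 2) * (c * (φ x : ℂ)) = 0)) :=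
  stmt_7_general μ φ hφ
end

section
/- Let $B : I \to M_2(\mathbb{R})$ be an analytic family of real $2\times 2$ matrices on an interval $I\subset\mathbb{R}$, and suppose that for every $\mu\in I$ the eigenvalues of $B(\mu)$ are real. Then there exist analytic functions $\lambda_1,\lambda_2 : I \to \mathbb{R}$ such that the spectrum of $B(\mu)$ equals $\{\lambda_1(\mu),\lambda_2(\mu)\}$ for every $\mu\in I$. -/
/-!
The eigenvalues are `(tr B ± √Δ) / 2`, so everything reduces to an analytic square root of the
nonnegative analytic discriminant `Δ` on `I`. Near a point `μ₀` where `Δ` does not vanish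
identically, `Δ = (μ - μ₀) ^ n • g` with `g μ₀ ≠ 0`, and nonnegativity forces `n` even and
`g μ₀ > 0`, giving the local root `(μ - μ₀) ^ (n / 2) • √g`. Two analytic roots on an interval
agree up to one global sign, by the identity theorem applied to `(s - t) (s + t) = 0`; normalising
all roots to be positive at a fixed point `b` with `Δ b ≠ 0`, they glue along the connected `I`.
-/

open Set Polynomial Filter Topology

theorem AnalyticAt.exists_sq_eq_of_pos {g : ℝ → ℝ} {x : ℝ} (hg : AnalyticAt ℝ g x) (hx : 0 < g x) :
    ∃ s : ℝ → ℝ, AnalyticAt ℝ s x ∧ ∀ᶠ y in 𝓝 x, s y ^ 2 = g y := by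
  refine ⟨fun y => Real.exp (Real.log (g y) / 2), ((hg.log hx).div_const).rexp', ?_⟩
  filter_upwards [hg.continuousAt.eventually (eventually_gt_nhds hx)] with y hy
  rw [sq, ← Real.exp_add, add_halves, Real.exp_log hy]

theorem AnalyticAt.exists_sq_eq_of_eventually_nonneg {f : ℝ → ℝ} {x : ℝ} (hf : AnalyticAt ℝ f x)
    (hnn : ∀ᶠ y in 𝓝 x, 0 ≤ f y) (hord : analyticOrderAt f x ≠ ⊤) :
    ∃ s : ℝ → ℝ, AnalyticAt ℝ s x ∧ ∀ᶠ y in 𝓝 x, s y ^ 2 = f y := by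
  obtain ⟨g, hg, hgx, hfg⟩ := hf.analyticOrderAt_ne_top.1 hord
  set n := analyticOrderNatAt f x
  simp only [smul_eq_mul] at hfg
  have hfg_nonneg : ∀ᶠ y in 𝓝 x, 0 ≤ (y - x) ^ n * g y := by
    filter_upwards [hfg, hnn] with y h1 h2; rwa [← h1]
  -- to the right of `x` the factor `(y - x) ^ n` is positive, so `g ≥ 0` there
  have hgx_pos : 0 < g x := by
    refine hgx.symm.lt_of_le (ge_of_tendsto (hg.continuousAt.tendsto.mono_left
      (nhdsWithin_le_nhds (s := Ioi x))) ?_)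
    filter_upwards [hfg_nonneg.filter_mono nhdsWithin_le_nhds, self_mem_nhdsWithin]
      with y hy (hxy : x < y)
    exact nonneg_of_mul_nonneg_right hy (pow_pos (sub_pos.2 hxy) n)
  -- to the left of `x`, `g > 0` forces `(y - x) ^ n ≥ 0`
  have hn : Even n := by
    by_contra hodd
    obtain ⟨y, ⟨hy, hgy⟩, hxy : y < x⟩ := ((hfg_nonneg.and (hg.continuousAt.eventually
      (eventually_gt_nhds hgx_pos))).filter_mono nhdsWithin_le_nhds |>.and
      (self_mem_nhdsWithin (s := Iio x))).exists
    have hpow : (y - x) ^ n < 0 := (Nat.not_even_iff_odd.1 hodd).pow_neg (sub_neg.2 hxy)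
    exact (mul_neg_of_neg_of_pos hpow hgy).not_ge hy
  obtain ⟨k, hk⟩ := hn
  obtain ⟨t, ht, htg⟩ := hg.exists_sq_eq_of_pos hgx_pos
  refine ⟨fun y => (y - x) ^ k * t y, ((analyticAt_id.sub analyticAt_const).pow k).mul ht, ?_⟩
  filter_upwards [hfg, htg] with y h1 h2
  rw [h1, mul_pow, h2, ← pow_mul, hk, mul_two]

theorem AnalyticOnNhd.piecewise {𝕜 E F : Type*} [NontriviallyNormedField 𝕜]
    [NormedAddCommGroup E] [NormedSpace 𝕜 E] [NormedAddCommGroup F] [NormedSpace 𝕜 F]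
    {U V : Set E} [∀ x, Decidable (x ∈ U)] {f g : E → F} (hU : IsOpen U) (hV : IsOpen V)
    (hf : AnalyticOnNhd 𝕜 f U) (hg : AnalyticOnNhd 𝕜 g V) (hfg : EqOn f g (U ∩ V)) :
    AnalyticOnNhd 𝕜 (U.piecewise f g) (U ∪ V) := by
  have hV_eq : EqOn (U.piecewise f g) g V := fun y hy => by
    by_cases hyU : y ∈ U
    · rw [piecewise_eq_of_mem _ _ _ hyU, hfg ⟨hyU, hy⟩]
    · exact piecewise_eq_of_notMem _ _ _ hyU
  rintro x (hx | hx)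
  · exact (hf x hx).congr (eventuallyEq_of_mem (hU.mem_nhds hx) (piecewise_eqOn U f g).symm)
  · exact (hg x hx).congr (eventuallyEq_of_mem (hV.mem_nhds hx) hV_eq.symm)

def IsAnalyticSqrtOn (f s : ℝ → ℝ) (U : Set ℝ) : Prop :=
  AnalyticOnNhd ℝ s U ∧ ∀ x ∈ U, s x ^ 2 = f x

namespace IsAnalyticSqrtOn

variable {f s t : ℝ → ℝ} {U V : Set ℝ}

theorem mono (hs : IsAnalyticSqrtOn f s U) (hVU : V ⊆ U) : IsAnalyticSqrtOn f s V :=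
  ⟨hs.1.mono hVU, fun x hx => hs.2 x (hVU hx)⟩

theorem neg (hs : IsAnalyticSqrtOn f s U) : IsAnalyticSqrtOn f (-s) U :=
  ⟨hs.1.neg, fun x hx => by rw [Pi.neg_apply, neg_sq, hs.2 x hx]⟩

theorem eqOn_or_eqOn_neg (hs : IsAnalyticSqrtOn f s U) (ht : IsAnalyticSqrtOn f t U)
    (hU : IsPreconnected U) : EqOn s t U ∨ EqOn s (-t) U := by
  have hprod : ∀ x ∈ U, (s - t) x * (s + t) x = 0 := fun x hx => by
    simp only [Pi.sub_apply, Pi.add_apply]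
    linear_combination hs.2 x hx - ht.2 x hx
  refine (AnalyticOnNhd.eq_zero_or_eq_zero_of_mul_eq_zero (hs.1.sub ht.1) (hs.1.add ht.1)
    hprod hU).imp (fun h x hx => sub_eq_zero.1 (h x hx)) (fun h x hx => ?_)
  exact eq_neg_of_add_eq_zero_left (h x hx)

theorem piecewise [∀ x, Decidable (x ∈ U)] (hs : IsAnalyticSqrtOn f s U)
    (ht : IsAnalyticSqrtOn f t V) (hU : IsOpen U) (hV : IsOpen V) (hst : EqOn s t (U ∩ V)) :
    IsAnalyticSqrtOn f (U.piecewise s t) (U ∪ V) := by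
  refine ⟨hs.1.piecewise hU hV ht.1 hst, ?_⟩
  rintro x (hx | hx)
  · rw [piecewise_eq_of_mem _ _ _ hx, hs.2 x hx]
  · by_cases hxU : x ∈ U
    · rw [piecewise_eq_of_mem _ _ _ hxU, hs.2 x hxU]
    · rw [piecewise_eq_of_notMem _ _ _ hxU, ht.2 x hx]

end IsAnalyticSqrtOn

-- Positivity at `b` singles out one of the two branches `±s`, which makes branches unique.
def IsSqrtBranch (f : ℝ → ℝ) (b : ℝ) (U : Set ℝ) (s : ℝ → ℝ) : Prop :=
  IsOpen U ∧ U.OrdConnected ∧ b ∈ U ∧ IsAnalyticSqrtOn f s U ∧ 0 < s b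

namespace IsSqrtBranch

variable {f s t : ℝ → ℝ} {b : ℝ} {U V : Set ℝ}

theorem eqOn_inter (hs : IsSqrtBranch f b U s) (ht : IsSqrtBranch f b V t) :
    EqOn s t (U ∩ V) := by
  obtain ⟨-, hUc, hbU, hsU, hsb⟩ := hs
  obtain ⟨-, hVc, hbV, htV, htb⟩ := ht
  refine ((hsU.mono inter_subset_left).eqOn_or_eqOn_neg (htV.mono inter_subset_right)
    (hUc.inter hVc).isPreconnected).resolve_right fun h => ?_
  have := h ⟨hbU, hbV⟩
  simp only [Pi.neg_apply] at this
  linarith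

theorem exists_union (hs : IsSqrtBranch f b U s) (ht : IsAnalyticSqrtOn f t V) (hV : IsOpen V)
    (hVc : V.OrdConnected) (hUV : (U ∩ V).Nonempty) :
    ∃ s', IsSqrtBranch f b (U ∪ V) s' := by
  classical
  obtain ⟨hU, hUc, hbU, hsU, hsb⟩ := hs
  obtain ⟨x, hxU, hxV⟩ := hUV
  obtain ⟨t', ht', hst'⟩ : ∃ t', IsAnalyticSqrtOn f t' V ∧ EqOn s t' (U ∩ V) := by
    rcases (hsU.mono inter_subset_left).eqOn_or_eqOn_neg (ht.mono inter_subset_right)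
      (hUc.inter hVc).isPreconnected with h | h
    exacts [⟨t, ht, h⟩, ⟨-t, ht.neg, h⟩]
  refine ⟨U.piecewise s t', hU.union hV,
    (hUc.isPreconnected.union x hxU hxV hVc.isPreconnected).ordConnected, Or.inl hbU,
    hsU.piecewise ht' hU hV hst', ?_⟩
  rwa [piecewise_eq_of_mem _ _ _ hbU]

end IsSqrtBranch

theorem exists_isAnalyticSqrtOn_of_forall_mem_sqrtBranch {f : ℝ → ℝ} {b : ℝ} {I : Set ℝ}
    (hI : ∀ x ∈ I, ∃ U s, U ⊆ I ∧ x ∈ U ∧ IsSqrtBranch f b U s) :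
    ∃ s, IsAnalyticSqrtOn f s I := by
  choose! U s hUI hxU hs using hI
  have hglue : ∀ x ∈ I, EqOn (fun y => s y y) (s x) (U x) := fun x hx y hy =>
    (hs y (hUI x hx hy)).eqOn_inter (hs x hx) ⟨hxU y (hUI x hx hy), hy⟩
  refine ⟨fun y => s y y, fun x hx => ?_, fun x hx => (hs x hx).2.2.2.1.2 x (hxU x hx)⟩
  exact ((hs x hx).2.2.2.1.1 x (hxU x hx)).congr
    (eventuallyEq_of_mem ((hs x hx).1.mem_nhds (hxU x hx)) (hglue x hx).symm)

theorem IsPreconnected.forall_mem_sqrtBranch {f : ℝ → ℝ} {b : ℝ} {I : Set ℝ}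
    (hI : IsPreconnected I) (hbI : b ∈ I) (hfb : f b ≠ 0)
    (hloc : ∀ x ∈ I, ∃ V t, IsOpen V ∧ V.OrdConnected ∧ V ⊆ I ∧ x ∈ V ∧ IsAnalyticSqrtOn f t V) :
    ∀ x ∈ I, ∃ U s, U ⊆ I ∧ x ∈ U ∧ IsSqrtBranch f b U s := by
  set T := {x | ∃ U s, U ⊆ I ∧ x ∈ U ∧ IsSqrtBranch f b U s}
  have hT : IsOpen T := isOpen_iff_forall_mem_open.2 fun x ⟨U, s, hUI, hxU, hs⟩ =>
    ⟨U, fun y hy => ⟨U, s, hUI, hy, hs⟩, hs.1, hxU⟩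
  have hbT : b ∈ T := by
    obtain ⟨V, t, hV, hVc, hVI, hbV, ht⟩ := hloc b hbI
    have htb : t b ≠ 0 := fun h => hfb (by rw [← ht.2 b hbV, h, sq, zero_mul])
    rcases htb.lt_or_gt with h | h
    exacts [⟨V, -t, hVI, hbV, hV, hVc, hbV, ht.neg, neg_pos.2 h⟩,
      ⟨V, t, hVI, hbV, hV, hVc, hbV, ht, h⟩]
  have hcl : closure T ∩ I ⊆ T := by
    rintro x ⟨hxT, hxI⟩
    obtain ⟨V, t, hV, hVc, hVI, hxV, ht⟩ := hloc x hxI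
    obtain ⟨y, hyV, U, s, hUI, hyU, hs⟩ := mem_closure_iff_nhds.1 hxT V (hV.mem_nhds hxV)
    obtain ⟨s', hs'⟩ := hs.exists_union ht hV hVc ⟨y, hyU, hyV⟩
    exact ⟨U ∪ V, s', union_subset hUI hVI, Or.inr hxV, hs'⟩
  exact hI.subset_of_closure_inter_subset hT ⟨b, hbI, hbT⟩ hcl

theorem AnalyticOnNhd.exists_sq_eq_of_nonneg {f : ℝ → ℝ} {I : Set ℝ} (hIo : IsOpen I)
    (hI : IsPreconnected I) (hf : AnalyticOnNhd ℝ f I) (hnn : ∀ x ∈ I, 0 ≤ f x) :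
    ∃ s, AnalyticOnNhd ℝ s I ∧ ∀ x ∈ I, s x ^ 2 = f x := by
  by_cases h0 : ∀ x ∈ I, f x = 0
  · exact ⟨0, analyticOnNhd_const, fun x hx => by rw [h0 x hx, Pi.zero_apply, sq, zero_mul]⟩
  push Not at h0
  obtain ⟨b, hbI, hfb⟩ := h0
  have hord : ∀ x ∈ I, analyticOrderAt f x ≠ ⊤ := fun x hx =>
    analyticOrderAt_ne_top_of_isPreconnected hf hI hbI hx
      (by rw [(hf b hbI).analyticOrderAt_eq_zero.2 hfb]; exact ENat.zero_ne_top)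
  have hloc : ∀ x ∈ I, ∃ V t, IsOpen V ∧ V.OrdConnected ∧ V ⊆ I ∧ x ∈ V ∧
      IsAnalyticSqrtOn f t V := by
    intro x hx
    obtain ⟨t, ht, htf⟩ := (hf x hx).exists_sq_eq_of_eventually_nonneg
      (eventually_of_mem (hIo.mem_nhds hx) hnn) (hord x hx)
    obtain ⟨ε, hε, hball⟩ := Metric.eventually_nhds_iff_ball.1
      ((htf.and ht.eventually_analyticAt).and (hIo.mem_nhds hx))
    exact ⟨Metric.ball x ε, t, Metric.isOpen_ball, (convex_ball x ε).ordConnected,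
      fun y hy => (hball y hy).2, Metric.mem_ball_self hε,
      fun y hy => (hball y hy).1.2, fun y hy => (hball y hy).1.1⟩
  exact exists_isAnalyticSqrtOn_of_forall_mem_sqrtBranch
    (hI.forall_mem_sqrtBranch hbI hfb hloc)

theorem Matrix.charpoly_fin_two_eq_mul_of_sq_eq {K : Type*} [Field K] [NeZero (2 : K)]
    (A : Matrix (Fin 2) (Fin 2) K) {s : K} (hs : s ^ 2 = A.trace ^ 2 - 4 * A.det) :
    A.charpoly = (X - C ((A.trace + s) / 2)) * (X - C ((A.trace - s) / 2)) := by
  have htr : A.trace = (A.trace + s) / 2 + (A.trace - s) / 2 := by field_simp; ring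
  have hdet : A.det = (A.trace + s) / 2 * ((A.trace - s) / 2) := by
    field_simp; linear_combination hs
  rw [Matrix.charpoly_fin_two, hdet]
  nth_rw 1 [htr]
  simp only [map_add, map_mul]
  ring

section
variable {𝕜 : Type*} [NontriviallyNormedField 𝕜] {n : Type*} [Fintype n]
  {B : 𝕜 → Matrix n n 𝕜} {I : Set 𝕜}

theorem AnalyticOnNhd.matrix_trace (hB : ∀ i j, AnalyticOnNhd 𝕜 (fun μ => B μ i j) I) :
    AnalyticOnNhd 𝕜 (fun μ => (B μ).trace) I :=
  Finset.analyticOnNhd_fun_sum _ fun i _ => hB i i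

theorem AnalyticOnNhd.matrix_det [DecidableEq n]
    (hB : ∀ i j, AnalyticOnNhd 𝕜 (fun μ => B μ i j) I) :
    AnalyticOnNhd 𝕜 (fun μ => (B μ).det) I := by
  simp only [Matrix.det_apply, Units.smul_def, zsmul_eq_mul]
  exact Finset.analyticOnNhd_fun_sum _ fun σ _ => analyticOnNhd_const.mul
    (Finset.analyticOnNhd_fun_prod _ fun i _ => hB (σ i) i)
end

/-- an analytic family of real 2×2 matrices on an interval with everywhere
real eigenvalues (equivalently, nonnegative discriminant) admits two analytic eigenvalue
branches `λ₁, λ₂` with `Sp B(μ) = {λ₁(μ), λ₂(μ)}` (counted with multiplicity via the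
characteristic polynomial). -/
theorem stmt_10 (I : Set ℝ) (hIopen : IsOpen I) (hIconn : I.OrdConnected)
    (B : ℝ → Matrix (Fin 2) (Fin 2) ℝ)
    (hB : ∀ i j, AnalyticOnNhd ℝ (fun μ => B μ i j) I)
    (hreal : ∀ μ ∈ I, 0 ≤ (Matrix.trace (B μ)) ^ 2 - 4 * (B μ).det) :
    ∃ l1 l2 : ℝ → ℝ, AnalyticOnNhd ℝ l1 I ∧ AnalyticOnNhd ℝ l2 I ∧
      ∀ μ ∈ I, (B μ).charpoly = (X - C (l1 μ)) * (X - C (l2 μ)) := by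
  have htr := AnalyticOnNhd.matrix_trace hB
  have hdisc : AnalyticOnNhd ℝ (fun μ => (B μ).trace ^ 2 - 4 * (B μ).det) I :=
    (htr.pow 2).sub (analyticOnNhd_const.mul (AnalyticOnNhd.matrix_det hB))
  obtain ⟨s, hs, hsq⟩ := hdisc.exists_sq_eq_of_nonneg hIopen hIconn.isPreconnected hreal
  exact ⟨_, _, (htr.add hs).div_const, (htr.sub hs).div_const,
    fun μ hμ => (B μ).charpoly_fin_two_eq_mul_of_sq_eq (hsq μ hμ)⟩
end

section
/- The Green's function $G_\omega(x,\sigma) = -\frac{\sinh(\omega x)\sinh(\omega(1-\sigma))}{\omega\sinh\omega} + \frac{\sinh(\omega(x-\sigma))}{\omega}\mathbf{1}_{\sigma<x}$ of the operator $\frac{d^2}{dx^2}-\omega^2$ on $(0,1)$ with Dirichlet conditions satisfies $\sup_{(x,\sigma)\in[0,1]^2} |G_\omega(x,\sigma)| = \frac{\cosh\omega - 1}{2\omega\sinh\omega}$, attained at $(x,\sigma)=(1/2,1/2)$; in particular $\sup|G_\omega| = O(1/\omega)$ as $\omega\to\infty$. -/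
open Set

/-- The Green's function of `d²/dx² - ω²` on `(0,1)` with Dirichlet boundary conditions. -/
noncomputable def greenFn (ω x σ : ℝ) : ℝ :=
  -(Real.sinh (ω * x) * Real.sinh (ω * (1 - σ))) / (ω * Real.sinh ω) +
    (if σ < x then Real.sinh (ω * (x - σ)) / ω else 0)

lemma sinh_prod_bound {a b ω : ℝ} (ha : 0 ≤ a) (hb : 0 ≤ b) (hab : a + b ≤ ω) :
    Real.sinh a * Real.sinh b ≤ (Real.cosh ω - 1) / 2 := by
  have h1 : Real.cosh (a + b) = Real.cosh a * Real.cosh b + Real.sinh a * Real.sinh b :=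
    Real.cosh_add a b
  have h2 : Real.cosh (a - b) = Real.cosh a * Real.cosh b - Real.sinh a * Real.sinh b :=
    Real.cosh_sub a b
  have h3 : 1 ≤ Real.cosh (a - b) := Real.one_le_cosh _
  have h4 : Real.cosh (a + b) ≤ Real.cosh ω := by
    rw [Real.cosh_le_cosh]
    rw [abs_of_nonneg (by linarith), abs_of_nonneg (by linarith : (0:ℝ) ≤ ω)]
    exact hab
  nlinarith

lemma sinh_identity (a b c : ℝ) :
    Real.sinh b * Real.sinh (c - a) =
      Real.sinh a * Real.sinh (c - b) - Real.sinh (a - b) * Real.sinh c := by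
  simp only [Real.sinh_sub]; ring

lemma green_eq_of_lt {ω x σ : ℝ} (hω : 0 < ω) (h : σ < x) :
    greenFn ω x σ = -(Real.sinh (ω * σ) * Real.sinh (ω * (1 - x))) / (ω * Real.sinh ω) := by
  have hs : Real.sinh ω ≠ 0 := ne_of_gt (Real.sinh_pos_iff.2 hω)
  have key := sinh_identity (ω * x) (ω * σ) ω
  have e1 : ω - ω * x = ω * (1 - x) := by ring
  have e2 : ω - ω * σ = ω * (1 - σ) := by ring
  have e3 : ω * x - ω * σ = ω * (x - σ) := by ring
  rw [e1, e2, e3] at key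
  rw [greenFn, if_pos h, key]
  field_simp
  ring

lemma green_abs_le {ω x σ : ℝ} (hω : 0 < ω) (hx : x ∈ Icc (0:ℝ) 1) (hσ : σ ∈ Icc (0:ℝ) 1) :
    |greenFn ω x σ| ≤ (Real.cosh ω - 1) / (2 * ω * Real.sinh ω) := by
  have hs : 0 < Real.sinh ω := Real.sinh_pos_iff.2 hω
  have hd : 0 < ω * Real.sinh ω := mul_pos hω hs
  obtain ⟨hx0, hx1⟩ := hx
  obtain ⟨hσ0, hσ1⟩ := hσ
  have main : ∀ a b : ℝ, 0 ≤ a → 0 ≤ b → a + b ≤ ω →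
      |(-(Real.sinh a * Real.sinh b)) / (ω * Real.sinh ω)| ≤
        (Real.cosh ω - 1) / (2 * ω * Real.sinh ω) := by
    intro a b ha hb hab
    have hA : 0 ≤ Real.sinh a := Real.sinh_nonneg_iff.2 ha
    have hB : 0 ≤ Real.sinh b := Real.sinh_nonneg_iff.2 hb
    rw [abs_div, abs_neg, abs_of_nonneg (mul_nonneg hA hB), abs_of_pos hd]
    have hbd := sinh_prod_bound ha hb hab
    rw [div_le_div_iff₀ hd (by positivity)]
    nlinarith [mul_le_mul_of_nonneg_right hbd (le_of_lt hd)]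
  by_cases h : σ < x
  · rw [green_eq_of_lt hω h]
    exact main (ω * σ) (ω * (1 - x)) (by positivity) (by nlinarith) (by nlinarith)
  · rw [greenFn, if_neg h, add_zero]
    exact main (ω * x) (ω * (1 - σ)) (by positivity) (by nlinarith) (by nlinarith)

lemma green_value {ω : ℝ} (hω : 0 < ω) :
    |greenFn ω (1/2) (1/2)| = (Real.cosh ω - 1) / (2 * ω * Real.sinh ω) := by
  have hs : 0 < Real.sinh ω := Real.sinh_pos_iff.2 hω
  have hd : 0 < ω * Real.sinh ω := mul_pos hω hs
  have e : ω * (1 - 1/2 : ℝ) = ω * (1/2) := by ring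
  rw [greenFn, if_neg (lt_irrefl _), add_zero, e, abs_div, abs_neg,
    abs_of_nonneg (mul_self_nonneg _), abs_of_pos hd]
  have hcosh : Real.cosh ω = 2 * Real.sinh (ω * (1/2)) ^ 2 + 1 := by
    have h2 : ω = 2 * (ω * (1/2)) := by ring
    rw [h2, Real.cosh_two_mul, Real.cosh_sq]
    ring
  rw [div_eq_div_iff hd.ne' (by positivity : (2*ω*Real.sinh ω) ≠ 0)]
  nlinarith [mul_pos hω hs]

/-- `sup_{[0,1]²} |G_ω| = (cosh ω - 1)/(2 ω sinh ω)`, attained at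
`(1/2, 1/2)`; in particular this supremum is `O(1/ω)` as `ω → ∞`. -/
theorem stmt_12 :
    (∀ ω : ℝ, 0 < ω →
      IsGreatest ((fun p : ℝ × ℝ => |greenFn ω p.1 p.2|) ''
          (Set.Icc 0 1 ×ˢ Set.Icc 0 1))
        ((Real.cosh ω - 1) / (2 * ω * Real.sinh ω)) ∧
      |greenFn ω (1/2) (1/2)| = (Real.cosh ω - 1) / (2 * ω * Real.sinh ω)) ∧
    ∃ C : ℝ, 0 < C ∧ ∀ ω : ℝ, 1 ≤ ω →
      (Real.cosh ω - 1) / (2 * ω * Real.sinh ω) ≤ C / ω := by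
  constructor
  · intro ω hω
    refine ⟨⟨⟨(1/2, 1/2), ?_, green_value hω⟩, ?_⟩, green_value hω⟩
    · constructor <;> constructor <;> norm_num
    · rintro y ⟨⟨x, σ⟩, ⟨hx, hσ⟩, rfl⟩
      exact green_abs_le hω hx hσ
  · refine ⟨1, one_pos, fun ω hω => ?_⟩
    have hω0 : 0 < ω := lt_of_lt_of_le one_pos hω
    have hs : 0 < Real.sinh ω := Real.sinh_pos_iff.2 hω0
    have h1 : Real.cosh ω - Real.sinh ω = Real.exp (-ω) := by
      rw [Real.cosh_eq, Real.sinh_eq]; ring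
    have h2 : Real.exp (-ω) ≤ 1 := Real.exp_le_one_iff.2 (by linarith)
    rw [div_le_div_iff₀ (by positivity) hω0]
    nlinarith
end

section
/- Let $\mu\in(-\pi^2,\infty)$ and suppose $(f,g)$ with $f,g\in H^2\cap H^1_0(0,1)$, $(f,g)\neq(0,0)$, and $\beta\neq 0$ satisfy $f''+(\phi_\mu^2-\mu)f=\beta g$ and $g''+(3\phi_\mu^2-\mu)g=\beta f$ with Dirichlet boundary conditions. Then $\int_0^1 \phi_\mu(x)g(x)\,dx = 0$ and $\int_0^1 (x\phi_\mu)'(x) f(x)\,dx = \frac{\phi_\mu'(1)\,g'(1)}{\beta}$. -/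
open Set

/-!
Both identities are Lagrange identities `∫ (u v'' - u'' v) = [u v' - u' v]`, applied with
`u = φ_μ`, `v = f` and with `u = (xφ_μ)'`, `v = g`. The ground state equation makes
`φ_μ f'' - φ_μ'' f = β φ_μ g`, so the first identity gives `∫ φ_μ g = 0` because all
boundary terms vanish. Differentiating the ground state equation gives
`[∂² + 3φ_μ² - μ](xφ_μ)' = 2μφ_μ`, so `(xφ_μ)' g'' - (xφ_μ)''' g = β (xφ_μ)' f - 2μ φ_μ g`;
the only surviving boundary term is `(xφ_μ)'(1) g'(1) = φ_μ'(1) g'(1)`.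
-/

theorem integral_eq_sub_of_mul_deriv_sub_deriv_mul {a b : ℝ} (hab : a ≤ b)
    {u u' u'' v v' v'' w : ℝ → ℝ}
    (hu : ∀ x ∈ Icc a b, HasDerivAt u (u' x) x) (hu'c : ContinuousOn u' (Icc a b))
    (hu' : ∀ x ∈ Ioo a b, HasDerivAt u' (u'' x) x)
    (hv : ∀ x ∈ Icc a b, HasDerivAt v (v' x) x) (hv'c : ContinuousOn v' (Icc a b))
    (hv' : ∀ x ∈ Ioo a b, HasDerivAt v' (v'' x) x)
    (hw : ∀ x ∈ Ioo a b, u x * v'' x - u'' x * v x = w x)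
    (hwi : IntervalIntegrable w MeasureTheory.volume a b) :
    ∫ x in a..b, w x = (u b * v' b - u' b * v b) - (u a * v' a - u' a * v a) := by
  refine intervalIntegral.integral_eq_sub_of_hasDerivAt_of_le hab
    (((HasDerivAt.continuousOn hu).mul hv'c).sub (hu'c.mul (HasDerivAt.continuousOn hv)))
    (fun x hx => ?_) hwi
  have hx' := Ioo_subset_Icc_self hx
  refine (((hu x hx').mul (hv' x hx)).sub ((hu' x hx).mul (hv x hx'))).congr_deriv ?_
  rw [← hw x hx]
  ring

theorem hasDerivAt_two_mul_deriv_add_mul_deriv2 {μ x : ℝ} {φ φ' φ'' : ℝ → ℝ}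
    (hφ : HasDerivAt φ (φ' x) x) (hφ' : HasDerivAt φ' (φ'' x) x)
    (heq : ∀ᶠ y in nhds x, φ'' y + φ y ^ 3 = μ * φ y) :
    HasDerivAt (fun y => 2 * φ' y + y * φ'' y)
      (2 * μ * φ x - (3 * φ x ^ 2 - μ) * (φ x + x * φ' x)) x := by
  have hφ'' : HasDerivAt φ'' (μ * φ' x - 3 * φ x ^ 2 * φ' x) x := by
    have hrhs : HasDerivAt (fun y => μ * φ y - φ y ^ 3) (μ * φ' x - 3 * φ x ^ 2 * φ' x) x :=
      ((hφ.const_mul μ).sub (hφ.pow 3)).congr_deriv (by push_cast; ring)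
    refine hrhs.congr_of_eventuallyEq ?_
    filter_upwards [heq] with y hy
    linarith
  refine ((hφ'.const_mul 2).add ((hasDerivAt_id x).mul hφ'')).congr_deriv ?_
  simp only [id]
  linear_combination 3 * heq.self_of_nhds

section LinearizedSystem

variable {μ β : ℝ} {φ φ' φ'' f f' f'' g g' g'' : ℝ → ℝ}

theorem continuousOn_deriv2_of_ground_state {s : Set ℝ}
    (hφd : ∀ x ∈ s, HasDerivAt φ (φ' x) x)
    (hφeq : ∀ x ∈ s, φ'' x + φ x ^ 3 = μ * φ x) : ContinuousOn φ'' s := by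
  have hφc := HasDerivAt.continuousOn hφd
  refine ContinuousOn.congr (f := fun x => μ * φ x - φ x ^ 3)
    ((continuousOn_const.mul hφc).sub (hφc.pow 3)) fun x hx => ?_
  linarith [hφeq x hx]

theorem integral_ground_state_mul_eq_zero {a b : ℝ} (hab : a ≤ b) (hβ : β ≠ 0)
    (hφd : ∀ x ∈ Icc a b, HasDerivAt φ (φ' x) x ∧ HasDerivAt φ' (φ'' x) x)
    (hφeq : ∀ x ∈ Icc a b, φ'' x + φ x ^ 3 = μ * φ x) (hφa : φ a = 0) (hφb : φ b = 0)
    (hfd : ∀ x ∈ Icc a b, HasDerivAt f (f' x) x ∧ HasDerivAt f' (f'' x) x)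
    (hgc : ContinuousOn g (Icc a b))
    (hfeq : ∀ x ∈ Icc a b, f'' x + (φ x ^ 2 - μ) * f x = β * g x)
    (hfa : f a = 0) (hfb : f b = 0) :
    ∫ x in a..b, φ x * g x = 0 := by
  have hφc := HasDerivAt.continuousOn fun x hx => (hφd x hx).1
  have hwronskian := integral_eq_sub_of_mul_deriv_sub_deriv_mul (w := fun x => β * (φ x * g x)) hab
    (fun x hx => (hφd x hx).1) (HasDerivAt.continuousOn fun x hx => (hφd x hx).2)
    (fun x hx => (hφd x (Ioo_subset_Icc_self hx)).2)
    (fun x hx => (hfd x hx).1) (HasDerivAt.continuousOn fun x hx => (hfd x hx).2)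
    (fun x hx => (hfd x (Ioo_subset_Icc_self hx)).2)
    (fun x hx => by
      have hx' := Ioo_subset_Icc_self hx
      linear_combination -f x * hφeq x hx' + φ x * hfeq x hx')
    ((continuousOn_const.mul (hφc.mul hgc)).intervalIntegrable_of_Icc hab)
  rw [intervalIntegral.integral_const_mul, hφa, hφb, hfa, hfb] at hwronskian
  simpa [hβ] using hwronskian

theorem integral_deriv_id_mul_ground_state_mul_eq
    (hβ : β ≠ 0)
    (hφd : ∀ x ∈ Icc (0:ℝ) 1, HasDerivAt φ (φ' x) x ∧ HasDerivAt φ' (φ'' x) x)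
    (hφeq : ∀ x ∈ Icc (0:ℝ) 1, φ'' x + φ x ^ 3 = μ * φ x) (hφ0 : φ 0 = 0) (hφ1 : φ 1 = 0)
    (hfc : ContinuousOn f (Icc 0 1))
    (hgd : ∀ x ∈ Icc (0:ℝ) 1, HasDerivAt g (g' x) x ∧ HasDerivAt g' (g'' x) x)
    (hgeq : ∀ x ∈ Icc (0:ℝ) 1, g'' x + (3 * φ x ^ 2 - μ) * g x = β * f x)
    (hg0 : g 0 = 0) (hg1 : g 1 = 0) (hφg : ∫ x in (0:ℝ)..1, φ x * g x = 0) :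
    ∫ x in (0:ℝ)..1, (φ x + x * φ' x) * f x = φ' 1 * g' 1 / β := by
  have hφc := HasDerivAt.continuousOn fun x hx => (hφd x hx).1
  have hφ'c := HasDerivAt.continuousOn fun x hx => (hφd x hx).2
  have hφ''c := continuousOn_deriv2_of_ground_state (fun x hx => (hφd x hx).1) hφeq
  have hψfi : IntervalIntegrable (fun x => (φ x + x * φ' x) * f x) MeasureTheory.volume 0 1 :=
    ((hφc.add (continuousOn_id.mul hφ'c)).mul hfc).intervalIntegrable_of_Icc zero_le_one
  have hφgi : IntervalIntegrable (fun x => φ x * g x) MeasureTheory.volume 0 1 :=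
    (hφc.mul (HasDerivAt.continuousOn fun x hx => (hgd x hx).1)).intervalIntegrable_of_Icc
      zero_le_one
  have hwronskian := integral_eq_sub_of_mul_deriv_sub_deriv_mul
    (u := fun x => φ x + x * φ' x) (u' := fun x => 2 * φ' x + x * φ'' x)
    (u'' := fun x => 2 * μ * φ x - (3 * φ x ^ 2 - μ) * (φ x + x * φ' x))
    (w := fun x => β * ((φ x + x * φ' x) * f x) - 2 * μ * (φ x * g x)) zero_le_one
    (fun x hx => ((hφd x hx).1.add ((hasDerivAt_id x).mul (hφd x hx).2)).congr_deriv
      (by simp only [id]; ring))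
    ((continuousOn_const.mul hφ'c).add (continuousOn_id.mul hφ''c))
    (fun x hx => hasDerivAt_two_mul_deriv_add_mul_deriv2 (hφd x (Ioo_subset_Icc_self hx)).1
      (hφd x (Ioo_subset_Icc_self hx)).2
      (Filter.eventually_of_mem (Icc_mem_nhds hx.1 hx.2) hφeq))
    (fun x hx => (hgd x hx).1) (HasDerivAt.continuousOn fun x hx => (hgd x hx).2)
    (fun x hx => (hgd x (Ioo_subset_Icc_self hx)).2)
    (fun x hx => by linear_combination (φ x + x * φ' x) * hgeq x (Ioo_subset_Icc_self hx))
    ((hψfi.const_mul β).sub (hφgi.const_mul (2 * μ)))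
  rw [intervalIntegral.integral_sub (hψfi.const_mul β) (hφgi.const_mul (2 * μ)),
    intervalIntegral.integral_const_mul, intervalIntegral.integral_const_mul, hφg,
    hφ0, hφ1, hg0, hg1] at hwronskian
  rw [eq_div_iff hβ]
  linarith

end LinearizedSystem

theorem stmt_14_general (μ : ℝ)
    (φ φ' φ'' : ℝ → ℝ)
    (hφd : ∀ x ∈ Set.Icc (0:ℝ) 1, HasDerivAt φ (φ' x) x ∧ HasDerivAt φ' (φ'' x) x)
    (hφeq : ∀ x ∈ Set.Icc (0:ℝ) 1, φ'' x + φ x ^ 3 = μ * φ x)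
    (hφ0 : φ 0 = 0) (hφ1 : φ 1 = 0)
    (β : ℝ) (hβ : β ≠ 0)
    (f f' f'' g g' g'' : ℝ → ℝ)
    (hfd : ∀ x ∈ Set.Icc (0:ℝ) 1, HasDerivAt f (f' x) x ∧ HasDerivAt f' (f'' x) x)
    (hgd : ∀ x ∈ Set.Icc (0:ℝ) 1, HasDerivAt g (g' x) x ∧ HasDerivAt g' (g'' x) x)
    (hfeq : ∀ x ∈ Set.Icc (0:ℝ) 1, f'' x + (φ x ^ 2 - μ) * f x = β * g x)
    (hgeq : ∀ x ∈ Set.Icc (0:ℝ) 1, g'' x + (3 * φ x ^ 2 - μ) * g x = β * f x)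
    (hf0 : f 0 = 0) (hf1 : f 1 = 0) (hg0 : g 0 = 0) (hg1 : g 1 = 0) :
    (∫ x in (0:ℝ)..1, φ x * g x) = 0 ∧
    (∫ x in (0:ℝ)..1, (φ x + x * φ' x) * f x) = φ' 1 * g' 1 / β := by
  have hφg := integral_ground_state_mul_eq_zero zero_le_one hβ hφd hφeq hφ0 hφ1 hfd
    (HasDerivAt.continuousOn fun x hx => (hgd x hx).1) hfeq hf0 hf1
  exact ⟨hφg, integral_deriv_id_mul_ground_state_mul_eq hβ hφd hφeq hφ0 hφ1
    (HasDerivAt.continuousOn fun x hx => (hfd x hx).1) hgd hgeq hg0 hg1 hφg⟩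

/-- if `(f,g) ≠ (0,0)` solves the linearized eigenvalue system
`f'' + (φ_μ² - μ) f = β g`, `g'' + (3φ_μ² - μ) g = β f` with Dirichlet conditions and
`β ≠ 0`, then `∫₀¹ φ_μ g = 0` and `∫₀¹ (xφ_μ)' f = φ_μ'(1) g'(1) / β`. -/
theorem stmt_14 (μ : ℝ) (hμ : -Real.pi ^ 2 < μ)
    (φ φ' φ'' : ℝ → ℝ)
    (hφd : ∀ x ∈ Set.Icc (0:ℝ) 1, HasDerivAt φ (φ' x) x ∧ HasDerivAt φ' (φ'' x) x)
    (hφeq : ∀ x ∈ Set.Icc (0:ℝ) 1, φ'' x + φ x ^ 3 = μ * φ x)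
    (hφpos : ∀ x ∈ Set.Ioo (0:ℝ) 1, 0 < φ x) (hφ0 : φ 0 = 0) (hφ1 : φ 1 = 0)
    (β : ℝ) (hβ : β ≠ 0)
    (f f' f'' g g' g'' : ℝ → ℝ)
    (hfd : ∀ x ∈ Set.Icc (0:ℝ) 1, HasDerivAt f (f' x) x ∧ HasDerivAt f' (f'' x) x)
    (hgd : ∀ x ∈ Set.Icc (0:ℝ) 1, HasDerivAt g (g' x) x ∧ HasDerivAt g' (g'' x) x)
    (hfeq : ∀ x ∈ Set.Icc (0:ℝ) 1, f'' x + (φ x ^ 2 - μ) * f x = β * g x)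
    (hgeq : ∀ x ∈ Set.Icc (0:ℝ) 1, g'' x + (3 * φ x ^ 2 - μ) * g x = β * f x)
    (hf0 : f 0 = 0) (hf1 : f 1 = 0) (hg0 : g 0 = 0) (hg1 : g 1 = 0)
    (hne : ∃ x ∈ Set.Icc (0:ℝ) 1, f x ≠ 0 ∨ g x ≠ 0) :
    (∫ x in (0:ℝ)..1, φ x * g x) = 0 ∧
    (∫ x in (0:ℝ)..1, (φ x + x * φ' x) * f x) = φ' 1 * g' 1 / β :=
  stmt_14_general μ φ φ' φ'' hφd hφeq hφ0 hφ1 β hβ f f' f'' g g' g'' hfd hgd hfeq hgeq hf0 hf1 hg0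
    hg1
end
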